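/- arXiv:1611.03738 — 9 statements merged into one kernel-verified Lean document; each statement's English description precedes it below -/
import Mathlib

section
/- Let n ∈ ℕ*, let A ∈ ℝ^{n×n} and B ∈ ℝ^{n×1} satisfy the Kalman rank condition rank(B, AB, …, A^{n−1}B) = n. Assume that A has n pairwise distinct complex eigenvalues λ₁, …, λ_n, and let λ > 0 be such that (λ_i + λ)I − A is invertible for every 1 ≤ i ≤ n. Then there exists one and only one pair (T, K) with T ∈ ℝ^{n×n} invertible and K ∈ ℝ^{1×n} such that TA + BK = AT − λT and TB = B. -/
/-!
Put `C = A - λ I`. The pairs `(T, K)` with `T A + B K = C T` and `T B = B` are the preimages of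
`(0, B)` under the linear endomorphism `(T, K) ↦ (C T - T A - B K, T B)` of a finite-dimensional
space, so it suffices to show that this map is injective and that each such `T` is invertible.
Both use that `(C, B)` is controllable along with `(A, B)`.

If `T B = c B` with `c ≠ 0`, then `T` intertwines `A + c⁻¹ B K` with `C`, so the range of `T`
contains every `C^k B` and `T` is invertible. If `T B = 0`, then `(T A^j, K A^j)` solves the same
homogeneous equation, which gives `T A^(m+1) B = -(K A^m B) B` once `T A^m B = 0`; if that
coefficient were nonzero, `T A^(m+1)` would be invertible, forcing `B = 0`. Hence `T` vanishes
on every `A^k B`, so `T = 0`, and then `B K = 0` gives `K = 0`.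
-/

open Matrix

variable {𝕜 ι : Type*} [Field 𝕜] [Fintype ι] [DecidableEq ι]

/-- Indexing the Krylov vectors by all of `ℕ` rather than `Fin n` makes their span visibly
`A`-invariant. -/
def IsControllable (A : Matrix ι ι 𝕜) (B : ι → 𝕜) : Prop :=
  Submodule.span 𝕜 (Set.range fun k : ℕ => (A ^ k) *ᵥ B) = ⊤

theorem span_range_pow_mulVec_le {A : Matrix ι ι 𝕜} {B : ι → 𝕜} {W : Submodule 𝕜 (ι → 𝕜)}
    (hB : B ∈ W) (hW : ∀ v ∈ W, A *ᵥ v ∈ W) :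
    Submodule.span 𝕜 (Set.range fun k : ℕ => (A ^ k) *ᵥ B) ≤ W := by
  refine Submodule.span_le.2 ?_
  rintro _ ⟨k, rfl⟩
  induction k with
  | zero => simpa using hB
  | succ k ih => simpa only [SetLike.mem_coe, pow_succ', ← mulVec_mulVec] using hW _ ih

theorem mulVec_mem_span_range_pow_mulVec {A : Matrix ι ι 𝕜} {B v : ι → 𝕜}
    (hv : v ∈ Submodule.span 𝕜 (Set.range fun k : ℕ => (A ^ k) *ᵥ B)) :
    A *ᵥ v ∈ Submodule.span 𝕜 (Set.range fun k : ℕ => (A ^ k) *ᵥ B) := by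
  suffices h : Submodule.span 𝕜 (Set.range fun k : ℕ => (A ^ k) *ᵥ B) ≤
      (Submodule.span 𝕜 (Set.range fun k : ℕ => (A ^ k) *ᵥ B)).comap A.mulVecLin from h hv
  refine Submodule.span_le.2 ?_
  rintro _ ⟨k, rfl⟩
  exact Submodule.subset_span ⟨k + 1, by simp [pow_succ']⟩

namespace IsControllable

variable {A : Matrix ι ι 𝕜} {B : ι → 𝕜}

theorem of_span_range_fin {m : ℕ}
    (h : Submodule.span 𝕜 (Set.range fun i : Fin m => (A ^ (i : ℕ)) *ᵥ B) = ⊤) :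
    IsControllable A B :=
  eq_top_iff.2 <| h ▸ Submodule.span_mono (Set.range_subset_iff.2 fun i => ⟨i, rfl⟩)

theorem sub_smul_one (h : IsControllable A B) (c : 𝕜) : IsControllable (A - c • 1) B := by
  refine eq_top_iff.2 (h ▸ span_range_pow_mulVec_le (Submodule.subset_span ⟨0, by simp⟩) ?_)
  intro v hv
  have hAv : A *ᵥ v = (A - c • 1) *ᵥ v + c • v := by simp [sub_mulVec, smul_mulVec]
  rw [hAv]
  exact add_mem (mulVec_mem_span_range_pow_mulVec hv) (Submodule.smul_mem _ c hv)

end IsControllable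

def sylvesterMap (A C : Matrix ι ι 𝕜) (B : ι → 𝕜) :
    Matrix ι ι 𝕜 × (ι → 𝕜) →ₗ[𝕜] Matrix ι ι 𝕜 × (ι → 𝕜) where
  toFun p := (C * p.1 - p.1 * A - vecMulVec B p.2, p.1 *ᵥ B)
  map_add' p q := by
    ext : 1
    · simp only [Prod.fst_add, Prod.snd_add, mul_add, add_mul, vecMulVec_add]
      abel
    · exact add_mulVec _ _ _
  map_smul' c p := by
    ext : 1
    · simp only [Prod.smul_fst, Prod.smul_snd, Matrix.mul_smul, smul_mul, vecMulVec_smul,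
        smul_sub, RingHom.id_apply]
    · exact smul_mulVec _ _ _

theorem sylvesterMap_eq_iff {A C : Matrix ι ι 𝕜} {B w : ι → 𝕜} {p : Matrix ι ι 𝕜 × (ι → 𝕜)} :
    sylvesterMap A C B p = (0, w) ↔ p.1 * A + vecMulVec B p.2 = C * p.1 ∧ p.1 *ᵥ B = w := by
  simp only [sylvesterMap, LinearMap.coe_mk, AddHom.coe_mk, Prod.mk.injEq, sub_sub,
    sub_eq_zero, eq_comm]

section Sylvester

variable {A C T : Matrix ι ι 𝕜} {B K : ι → 𝕜}

theorem mul_pow_add_vecMulVec (hT : T * A + vecMulVec B K = C * T) (j : ℕ) :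
    T * A ^ j * A + vecMulVec B (K ᵥ* A ^ j) = C * (T * A ^ j) := by
  rw [← vecMulVec_mul, mul_assoc, ← pow_succ, pow_succ', ← mul_assoc, ← add_mul, hT, mul_assoc]

theorem isUnit_of_mulVec_eq_smul (hC : IsControllable C B)
    (hT : T * A + vecMulVec B K = C * T) {c : 𝕜} (hc : c ≠ 0) (hTB : T *ᵥ B = c • B) :
    IsUnit T := by
  have hM : SemiconjBy T (A + vecMulVec B (c⁻¹ • K)) C := by
    rw [SemiconjBy, mul_add, mul_vecMulVec, hTB, vecMulVec_smul, smul_vecMulVec, smul_smul,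
      inv_mul_cancel₀ hc, one_smul, hT]
  refine mulVec_surjective_iff_isUnit.1 <|
    (LinearMap.range_eq_top (f := T.mulVecLin)).1 (eq_top_iff.2 ?_)
  rw [← hC, Submodule.span_le]
  rintro _ ⟨k, rfl⟩
  refine ⟨c⁻¹ • ((A + vecMulVec B (c⁻¹ • K)) ^ k *ᵥ B), ?_⟩
  rw [mulVecLin_apply, mulVec_smul, mulVec_mulVec, (hM.pow_right k).eq, ← mulVec_mulVec, hTB,
    mulVec_smul, smul_smul, inv_mul_cancel₀ hc, one_smul]

theorem eq_zero_of_mulVec_eq_zero (hA : IsControllable A B) (hC : IsControllable C B)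
    (hT : T * A + vecMulVec B K = C * T) (hTB : T *ᵥ B = 0) : T = 0 ∧ K = 0 := by
  have hpow : ∀ m : ℕ, T *ᵥ (A ^ m *ᵥ B) = 0 := by
    intro m
    induction m with
    | zero => simpa using hTB
    | succ m ih =>
      have hstep : T *ᵥ (A ^ (m + 1) *ᵥ B) = -((K ᵥ* A ^ m) ⬝ᵥ B) • B := by
        have h := congrArg (· *ᵥ B) (mul_pow_add_vecMulVec hT m)
        simp only [add_mulVec, vecMulVec_mulVec, op_smul_eq_smul, ← mulVec_mulVec, ih,
          mulVec_zero] at h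
        rw [pow_succ, ← mulVec_mulVec, neg_smul]
        exact eq_neg_of_add_eq_zero_left h
      by_cases hc : (K ᵥ* A ^ m) ⬝ᵥ B = 0
      · simp [hstep, hc]
      · have hunit : IsUnit (T * A ^ (m + 1)) :=
          isUnit_of_mulVec_eq_smul hC (mul_pow_add_vecMulVec hT (m + 1)) (neg_ne_zero.2 hc)
            (by rw [← mulVec_mulVec, hstep])
        have hB : B = 0 := mulVec_injective_iff_isUnit.2 (isUnit_of_mul_isUnit_left hunit)
          (hTB.trans (mulVec_zero T).symm)
        simp [hB]
  have hT0 : T = 0 := Matrix.toLin'.injective <|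
    LinearMap.ext_on_range hA fun k => by simpa using hpow k
  subst hT0
  refine ⟨rfl, ?_⟩
  rcases (by simpa using hT : B = 0 ∨ K = 0) with rfl | hK
  · -- a controllable pair with `B = 0` lives on the zero space
    have h := hA ▸ Submodule.mem_top (x := K)
    simpa using h
  · exact hK

theorem sylvesterMap_bijective (hA : IsControllable A B) (hC : IsControllable C B) :
    Function.Bijective (sylvesterMap A C B) := by
  have hinj : Function.Injective (sylvesterMap A C B) := by
    refine (injective_iff_map_eq_zero _).2 fun p hp => ?_
    obtain ⟨hT, hTB⟩ := sylvesterMap_eq_iff.1 hp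
    obtain ⟨hT0, hK0⟩ := eq_zero_of_mulVec_eq_zero hA hC hT hTB
    exact Prod.ext hT0 hK0
  exact ⟨hinj, LinearMap.injective_iff_surjective.1 hinj⟩

end Sylvester

theorem statement0_general (n : ℕ)
    (A : Matrix (Fin n) (Fin n) ℝ) (B : Fin n → ℝ)
    (hKalman : Submodule.span ℝ (Set.range fun i : Fin n => (A ^ (i : ℕ)) *ᵥ B) = ⊤)
    (lam : ℝ) :
    ∃! TK : Matrix (Fin n) (Fin n) ℝ × (Fin n → ℝ),
      IsUnit TK.1 ∧
      TK.1 * A + vecMulVec B TK.2 = A * TK.1 - lam • TK.1 ∧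
      TK.1 *ᵥ B = B := by
  have hA : IsControllable A B := .of_span_range_fin hKalman
  have hC : IsControllable (A - lam • 1) B := hA.sub_smul_one lam
  have hC_mul : ∀ T : Matrix (Fin n) (Fin n) ℝ, A * T - lam • T = (A - lam • 1) * T := by
    intro T
    rw [sub_mul, smul_mul, one_mul]
  refine (existsUnique_congr fun p => ?_).1 ((sylvesterMap_bijective hA hC).existsUnique (0, B))
  rw [sylvesterMap_eq_iff, hC_mul]
  exact ⟨fun ⟨hT, hTB⟩ => ⟨isUnit_of_mulVec_eq_smul hC hT one_ne_zero (by rw [hTB, one_smul]),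
    hT, hTB⟩, fun ⟨_, hT, hTB⟩ => ⟨hT, hTB⟩⟩

/-- Let `A ∈ ℝ^{n×n}`, `B ∈ ℝ^{n×1}` satisfy the Kalman rank condition
(the columns `B, AB, …, A^{n−1}B` span `ℝ^n`).  Assume `A` has `n` pairwise distinct complex
eigenvalues `ev 1, …, ev n`, and let `λ > 0` be such that `(ev i + λ)I − A` is invertible for
every `i`.  Then there is one and only one pair `(T, K)` with `T` invertible such that
`TA + BK = AT − λT` and `TB = B`.  (Here `BK` is the `n×n` matrix `vecMulVec B K`.) -/
theorem statement0 (n : ℕ) (hn : 0 < n)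
    (A : Matrix (Fin n) (Fin n) ℝ) (B : Fin n → ℝ)
    (hKalman : Submodule.span ℝ (Set.range fun i : Fin n => (A ^ (i : ℕ)) *ᵥ B) = ⊤)
    (ev : Fin n → ℂ) (hev_inj : Function.Injective ev)
    (hev : ∀ i : Fin n, ∃ v : Fin n → ℂ, v ≠ 0 ∧ (A.map Complex.ofReal) *ᵥ v = ev i • v)
    (lam : ℝ) (hlam : 0 < lam)
    (hinv : ∀ i : Fin n,
      IsUnit ((ev i + (lam : ℂ)) • (1 : Matrix (Fin n) (Fin n) ℂ) - A.map Complex.ofReal)) :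
    ∃! TK : Matrix (Fin n) (Fin n) ℝ × (Fin n → ℝ),
      IsUnit TK.1 ∧
      TK.1 * A + vecMulVec B TK.2 = A * TK.1 - lam • TK.1 ∧
      TK.1 *ᵥ B = B :=
  statement0_general n A B hKalman lam
end

section
/- Let n ∈ ℕ*, let A ∈ ℂ^{n×n} and B ∈ ℂ^{n} satisfy the Kalman rank condition rank(B, AB, …, A^{n−1}B) = n. Assume A has n pairwise distinct eigenvalues λ₁, …, λ_n ∈ ℂ and let λ ∈ ℝ be such that (λ_i + λ)I − A is invertible for every 1 ≤ i ≤ n. Define f_i := −((λ_i + λ)I − A)^{-1} B for 1 ≤ i ≤ n. Then the family (f₁, …, f_n) is a basis of ℂ^n. -/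
/-!
Write `N = p(A)` for the nodal polynomial `p = ∏ᵢ (X - μᵢ)`, `μᵢ = λᵢ + λ`, and `pᵢ = p / (X - μᵢ)`.
Lagrange interpolation at the distinct nodes `μᵢ` expresses every `X ^ k` with `k < n` as a
combination of the `pᵢ`, and `pᵢ(A) B = N (A - μᵢ)⁻¹ B = N fᵢ`. Hence `N` maps the span of the
`fᵢ` onto the span of the Krylov vectors `A ^ k B`, which is everything by the Kalman condition;
so the `fᵢ` span `ℂⁿ`, and being `n` of them they form a basis.
-/

open Matrix Polynomial Lagrange Finset

variable {K ι m : Type*} [Field K] [Fintype ι] [DecidableEq ι] [Fintype m] [DecidableEq m]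

theorem Lagrange.eq_sum_C_mul_nodal_erase {μ : ι → K} (hμ : Function.Injective μ) {q : K[X]}
    (hq : q.degree < Fintype.card ι) :
    q = ∑ i, C (q.eval (μ i) * nodalWeight univ μ i) * nodal (univ.erase i) μ := by
  conv_lhs => rw [eq_interpolate (s := univ) hμ.injOn hq]
  refine sum_congr rfl fun i _ => ?_
  rw [basis_eq_prod_sub_inv_mul_nodal_div (mem_univ i), ← nodal_erase_eq_nodal_div (mem_univ i),
    C_mul, mul_assoc]

theorem Matrix.aeval_nodal_erase_mulVec {A : Matrix m m K} {μ : ι → K} {i : ι}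
    (hi : IsUnit (A - μ i • 1)) (b : m → K) :
    aeval A (nodal (univ.erase i) μ) *ᵥ b = aeval A (nodal univ μ) *ᵥ ((A - μ i • 1)⁻¹ *ᵥ b) := by
  have hN : aeval A (nodal univ μ) = aeval A (nodal (univ.erase i) μ) * (A - μ i • 1) := by
    rw [nodal_eq_mul_nodal_erase (mem_univ i), mul_comm, map_mul, map_sub, aeval_X, aeval_C,
      Algebra.algebraMap_eq_smul_one]
  rw [hN, mulVec_mulVec, Matrix.mul_assoc, mul_nonsing_inv _ ((isUnit_iff_isUnit_det _).mp hi),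
    Matrix.mul_one]

theorem Matrix.pow_mulVec_mem_map_span_inv_sub_mulVec {A : Matrix m m K} {μ : ι → K}
    (hμ : Function.Injective μ) (hinv : ∀ i, IsUnit (A - μ i • 1)) (b : m → K) {k : ℕ}
    (hk : k < Fintype.card ι) :
    A ^ k *ᵥ b ∈ (Submodule.span K (Set.range fun i => (A - μ i • 1)⁻¹ *ᵥ b)).map
      (aeval A (nodal univ μ)).mulVecLin := by
  have hXk := eq_sum_C_mul_nodal_erase hμ (q := X ^ k) (by
    rw [degree_X_pow]; exact_mod_cast hk)
  have hAk : A ^ k *ᵥ b = aeval A (nodal univ μ) *ᵥ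
      ∑ i, (μ i ^ k * nodalWeight univ μ i) • ((A - μ i • 1)⁻¹ *ᵥ b) := by
    rw [← aeval_X_pow (R := K), hXk, map_sum, sum_mulVec, mulVec_sum]
    refine sum_congr rfl fun i _ => ?_
    rw [map_mul, aeval_C, Algebra.algebraMap_eq_smul_one, smul_mul, Matrix.one_mul, smul_mulVec,
      aeval_nodal_erase_mulVec (hinv i), mulVec_smul, eval_pow, eval_X]
  rw [hAk]
  exact Submodule.mem_map_of_mem
    (Submodule.sum_mem _ fun i _ => Submodule.smul_mem _ _ (Submodule.subset_span ⟨i, rfl⟩))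

theorem Matrix.span_inv_sub_mulVec_eq_top {n : ℕ} (hn : n ≤ Fintype.card ι) {A : Matrix m m K}
    {b : m → K} (hKalman : Submodule.span K (Set.range fun k : Fin n => A ^ (k : ℕ) *ᵥ b) = ⊤)
    {μ : ι → K} (hμ : Function.Injective μ) (hinv : ∀ i, IsUnit (A - μ i • 1)) :
    Submodule.span K (Set.range fun i => (A - μ i • 1)⁻¹ *ᵥ b) = ⊤ := by
  set W := Submodule.span K (Set.range fun i => (A - μ i • 1)⁻¹ *ᵥ b)
  have hmap : W.map (aeval A (nodal univ μ)).mulVecLin = ⊤ := by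
    rw [eq_top_iff, ← hKalman, Submodule.span_le]
    rintro _ ⟨k, rfl⟩
    exact pow_mulVec_mem_map_span_inv_sub_mulVec hμ hinv b (k.isLt.trans_le hn)
  refine Submodule.eq_top_of_finrank_eq (W.finrank_le.antisymm ?_)
  calc Module.finrank K (m → K) = Module.finrank K (W.map (aeval A (nodal univ μ)).mulVecLin) := by
        rw [hmap, finrank_top]
    _ ≤ Module.finrank K W := Submodule.finrank_map_le _ _

theorem Matrix.neg_inv_smul_one_sub {A : Matrix m m K} {c : K} (h : IsUnit (c • 1 - A)) :
    -(c • 1 - A)⁻¹ = (A - c • 1)⁻¹ := by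
  refine (inv_eq_left_inv ?_).symm
  rw [← neg_sub (c • 1) A, neg_mul_neg, nonsing_inv_mul _ ((isUnit_iff_isUnit_det _).mp h)]

theorem statement1_general (n : ℕ)
    (A : Matrix (Fin n) (Fin n) ℂ) (B : Fin n → ℂ)
    (hKalman : Submodule.span ℂ (Set.range fun i : Fin n => (A ^ (i : ℕ)) *ᵥ B) = ⊤)
    (ev : Fin n → ℂ) (hev_inj : Function.Injective ev)
    (lam : ℝ)
    (hinv : ∀ i : Fin n,
      IsUnit ((ev i + (lam : ℂ)) • (1 : Matrix (Fin n) (Fin n) ℂ) - A)) :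
    LinearIndependent ℂ
      (fun i : Fin n => -(((ev i + (lam : ℂ)) • (1 : Matrix (Fin n) (Fin n) ℂ) - A)⁻¹ *ᵥ B)) ∧
    Submodule.span ℂ
      (Set.range fun i : Fin n =>
        -(((ev i + (lam : ℂ)) • (1 : Matrix (Fin n) (Fin n) ℂ) - A)⁻¹ *ᵥ B)) = ⊤ := by
  have hf : (fun i : Fin n => -(((ev i + (lam : ℂ)) • (1 : Matrix (Fin n) (Fin n) ℂ) - A)⁻¹ *ᵥ B))
      = fun i => (A - (ev i + (lam : ℂ)) • 1)⁻¹ *ᵥ B :=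
    funext fun i => by rw [← neg_mulVec, neg_inv_smul_one_sub (hinv i)]
  have hspan : Submodule.span ℂ (Set.range fun i => (A - (ev i + (lam : ℂ)) • 1)⁻¹ *ᵥ B) = ⊤ :=
    span_inv_sub_mulVec_eq_top (Fintype.card_fin n).ge hKalman
      (fun i j h => hev_inj (add_right_cancel h)) fun i => by
        rw [← neg_sub]; exact (hinv i).neg
  rw [hf]
  exact ⟨linearIndependent_of_top_le_span_of_card_eq_finrank hspan.ge (by simp), hspan⟩

/-- Let `A ∈ ℂ^{n×n}`, `B ∈ ℂ^n` satisfy the Kalman rank condition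
(the vectors `B, AB, …, A^{n−1}B` span `ℂ^n`).  Assume `A` has `n` pairwise distinct
eigenvalues `ev 1, …, ev n` and let `λ ∈ ℝ` be such that `(ev i + λ)I − A` is invertible
for every `i`.  Define `f i := −((ev i + λ)I − A)⁻¹ B`.  Then `(f i)_{i}` is a basis of
`ℂ^n`, i.e. it is linearly independent and spans. -/
theorem statement1 (n : ℕ) (hn : 0 < n)
    (A : Matrix (Fin n) (Fin n) ℂ) (B : Fin n → ℂ)
    (hKalman : Submodule.span ℂ (Set.range fun i : Fin n => (A ^ (i : ℕ)) *ᵥ B) = ⊤)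
    (ev : Fin n → ℂ) (hev_inj : Function.Injective ev)
    (hev : ∀ i : Fin n, ∃ v : Fin n → ℂ, v ≠ 0 ∧ A *ᵥ v = ev i • v)
    (lam : ℝ)
    (hinv : ∀ i : Fin n,
      IsUnit ((ev i + (lam : ℂ)) • (1 : Matrix (Fin n) (Fin n) ℂ) - A)) :
    LinearIndependent ℂ
      (fun i : Fin n => -(((ev i + (lam : ℂ)) • (1 : Matrix (Fin n) (Fin n) ℂ) - A)⁻¹ *ᵥ B)) ∧
    Submodule.span ℂ
      (Set.range fun i : Fin n =>
        -(((ev i + (lam : ℂ)) • (1 : Matrix (Fin n) (Fin n) ℂ) - A)⁻¹ *ᵥ B)) = ⊤ :=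
  statement1_general n A B hKalman ev hev_inj lam hinv
end

section
/- Let n ∈ ℕ*, let A ∈ ℂ^{n×n} and B ∈ ℂ^{n} satisfy the Kalman rank condition rank(B, AB, …, A^{n−1}B) = n, and let λ ∈ ℂ. If T ∈ ℂ^{n×n} and K ∈ ℂ^{1×n} satisfy TA + BK = AT − λT and TB = B, then T is invertible. -/
open Matrix

/-- Let `A ∈ ℂ^{n×n}`, `B ∈ ℂ^n` satisfy the Kalman rank condition
(the vectors `B, AB, …, A^{n−1}B` span `ℂ^n`) and let `λ ∈ ℂ`.  If `T ∈ ℂ^{n×n}` and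
`K ∈ ℂ^{1×n}` satisfy `TA + BK = AT − λT` and `TB = B`, then `T` is invertible.
(Here `BK` is the `n×n` matrix `vecMulVec B K`.) -/
theorem statement2 (n : ℕ) (hn : 0 < n)
    (A : Matrix (Fin n) (Fin n) ℂ) (B : Fin n → ℂ)
    (hKalman : Submodule.span ℂ (Set.range fun i : Fin n => (A ^ (i : ℕ)) *ᵥ B) = ⊤)
    (lam : ℂ)
    (T : Matrix (Fin n) (Fin n) ℂ) (K : Fin n → ℂ)
    (h1 : T * A + vecMulVec B K = A * T - lam • T)
    (h2 : T *ᵥ B = B) :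
    IsUnit T := by
  set v : ℕ → (Fin n → ℂ) := fun j => (A ^ j) *ᵥ B with hv
  have hTA : T * A = A * T - lam • T - vecMulVec B K := by
    rw [← h1]; abel
  have hvsucc : ∀ j, v (j + 1) = A *ᵥ v j := by
    intro j; simp [hv, pow_succ', mulVec_mulVec]
  have hBK : ∀ x : Fin n → ℂ, vecMulVec B K *ᵥ x = (K ⬝ᵥ x) • B := by
    intro x; ext i
    simp only [vecMulVec, mulVec, dotProduct, Pi.smul_apply, smul_eq_mul, of_apply,
      Finset.sum_mul]
    exact Finset.sum_congr rfl fun j _ => by ring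
  -- S k : span of v 0, ..., v (k-1)
  set S : ℕ → Submodule ℂ (Fin n → ℂ) := fun k => Submodule.span ℂ (v '' Set.Iio k)
  have hSmono : ∀ {j k}, j ≤ k → S j ≤ S k := by
    intro j k hjk
    exact Submodule.span_mono (Set.image_mono fun x hx => lt_of_lt_of_le hx hjk)
  have hvmem : ∀ {j k}, j < k → v j ∈ S k := fun hjk =>
    Submodule.subset_span ⟨_, hjk, rfl⟩
  have hAS : ∀ k, ∀ w ∈ S k, A *ᵥ w ∈ S (k + 1) := by
    intro k w hw
    have : S k ≤ Submodule.comap (Matrix.mulVecLin A) (S (k + 1)) := by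
      apply Submodule.span_le.2
      rintro _ ⟨j, hj, rfl⟩
      simpa [Matrix.mulVecLin_apply, ← hvsucc] using hvmem (Nat.succ_lt_succ hj)
    simpa [Matrix.mulVecLin_apply] using this hw
  -- key: T *ᵥ v k - v k ∈ S k
  have key : ∀ k, T *ᵥ v k - v k ∈ S k := by
    intro k
    induction k with
    | zero =>
        simp [hv, h2]
    | succ k ih =>
        have e1 : T *ᵥ v (k + 1) =
            A *ᵥ (T *ᵥ v k) - lam • (T *ᵥ v k) - (K ⬝ᵥ v k) • B := by
          rw [hvsucc, mulVec_mulVec, hTA]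
          simp [sub_mulVec, smul_mulVec, hBK, mulVec_mulVec]
        have hw : T *ᵥ v k = v k + (T *ᵥ v k - v k) := by ring
        rw [e1]
        have hA1 : A *ᵥ (T *ᵥ v k) - v (k + 1) ∈ S (k + 1) := by
          rw [hw, mulVec_add, hvsucc]
          simpa using hAS k _ ih
        have hA2 : lam • (T *ᵥ v k) ∈ S (k + 1) := by
          rw [hw]
          exact Submodule.smul_mem _ _
            (Submodule.add_mem _ (hvmem (Nat.lt_succ_self k))
              (hSmono (Nat.le_succ k) ih))
        have hA3 : (K ⬝ᵥ v k) • B ∈ S (k + 1) := by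
          exact Submodule.smul_mem _ _ (by simpa [hv] using hvmem (Nat.succ_pos k))
        have := Submodule.sub_mem _ (Submodule.sub_mem _ hA1 hA2) hA3
        convert this using 1
        ring
  -- each v k is in the range of mulVec T
  have hrange : ∀ k, v k ∈ LinearMap.range (Matrix.mulVecLin T) := by
    intro k
    induction k using Nat.strong_induction_on with
    | _ k ih =>
      have hS : S k ≤ LinearMap.range (Matrix.mulVecLin T) := by
        apply Submodule.span_le.2
        rintro _ ⟨j, hj, rfl⟩
        exact ih j hj
      have : v k = T *ᵥ v k - (T *ᵥ v k - v k) := by ring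
      rw [this]
      exact Submodule.sub_mem _ ⟨v k, rfl⟩ (hS (key k))
  -- surjectivity
  have hsurj : Function.Surjective (T *ᵥ ·) := by
    have htop : LinearMap.range (Matrix.mulVecLin T) = ⊤ := by
      rw [← top_le_iff, ← hKalman]
      apply Submodule.span_le.2
      rintro _ ⟨i, rfl⟩
      exact hrange i
    intro y
    obtain ⟨x, hx⟩ := (LinearMap.range_eq_top.1 htop) y
    exact ⟨x, hx⟩
  exact mulVec_surjective_iff_isUnit.1 hsurj
end

section
/- Let μ : [0,1] → ℝ be of class H³ (C², with μ'' absolutely continuous and a.e. derivative in L²((0,1))), set φ₁(x) := √2 sin(πx), φ_k(x) := √2 sin(kπx) and m_k := ∫₀¹ μ(x) φ₁(x) φ_k(x) dx. If there exists c > 0 such that |m_k| ≥ c/k³ for every k ∈ ℕ* (Hypothesis (H)), then μ'(1) ≠ μ'(0) and μ'(1) ≠ −μ'(0). -/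
open MeasureTheory

noncomputable section

/-- `φ_k(x) = √2 sin(kπx)`, `k ∈ ℕ*`; an orthonormal basis of `L²((0,1);ℝ)`. -/
def phi (k : ℕ) (x : ℝ) : ℝ := Real.sqrt 2 * Real.sin (k * Real.pi * x)

/-- `μ : [0,1] → ℝ` is of class `H³`: it is `C²`, `μ''` is absolutely continuous
(it is the integral of a density `g` on `[0,1]`), and this a.e. third derivative `g`
lies in `L²((0,1))`. -/
def IsH3 (μ : ℝ → ℝ) : Prop :=
  ContDiff ℝ 2 μ ∧
    ∃ g : ℝ → ℝ, MemLp g 2 (volume.restrict (Set.Ioo (0:ℝ) 1)) ∧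
      ∀ x ∈ Set.Icc (0:ℝ) 1,
        iteratedDeriv 2 μ x = iteratedDeriv 2 μ 0 + ∫ t in (0:ℝ)..x, g t

/-- The sine Fourier coefficient `m_k = ⟨μφ₁, φ_k⟩ = ∫₀¹ μ(x) φ₁(x) φ_k(x) dx`. -/
def mcoef (μ : ℝ → ℝ) (k : ℕ) : ℝ := ∫ x in (0:ℝ)..1, μ x * phi 1 x * phi k x

/-!
Three integrations by parts, the last one legitimate because `μ''` is absolutely continuous,
give for `n ≥ 1`
`∫₀¹ μ(x) cos(nπx) dx = ((-1)ⁿ μ'(1) - μ'(0)) / (nπ)² + Sₙ / (nπ)³`,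
where `Sₙ` is the `n`-th sine coefficient of `μ''' ∈ L¹`, so `Sₙ → 0` by Riemann–Lebesgue.
As `φ₁ φₙ₊₁ = cos(nπx) - cos((n+2)πx)`, the two boundary terms of `mₙ₊₁` carry the same factor
`(-1)ⁿ μ'(1) - μ'(0)`. If `μ'(1) = ±μ'(0)` this factor vanishes for all `n` of one parity, and
along those `n` we get `mₙ₊₁ = o(n⁻³)`, contradicting (H).
-/

open Filter Topology Real Set

theorem AbsolutelyContinuousOnInterval.congr {X : Type*} [PseudoMetricSpace X] {f g : ℝ → X}
    {a b : ℝ} (hf : AbsolutelyContinuousOnInterval f a b) (hfg : EqOn f g (uIcc a b)) :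
    AbsolutelyContinuousOnInterval g a b := by
  refine Tendsto.congr' ?_ hf
  filter_upwards [mem_inf_of_right (mem_principal_self _)] with E hE
  exact Finset.sum_congr rfl fun i hi => by rw [hfg (hE.1 i hi).1, hfg (hE.1 i hi).2]

theorem IsH3.absolutelyContinuousOnInterval_iteratedDeriv_two {μ : ℝ → ℝ} (hμ : IsH3 μ) :
    AbsolutelyContinuousOnInterval (iteratedDeriv 2 μ) 0 1 := by
  obtain ⟨-, g, hg, hrep⟩ := hμ
  have hgi : IntervalIntegrable g volume 0 1 :=
    (intervalIntegrable_iff_integrableOn_Ioo_of_le zero_le_one).2 (hg.integrable one_le_two)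
  have hprim := (contDiffOn_const (c := iteratedDeriv 2 μ 0)).absolutelyContinuousOnInterval.add
    (hgi.absolutelyContinuousOnInterval_intervalIntegral left_mem_uIcc)
  refine hprim.congr fun x hx => (hrep x ?_).symm
  rwa [uIcc_of_le zero_le_one] at hx

theorem tendsto_integral_mul_sin_cocompact {f : ℝ → ℝ} (hf : Integrable f) :
    Tendsto (fun t : ℝ => ∫ x, f x * sin (t * x)) (cocompact ℝ) (𝓝 0) := by
  have hscale : Tendsto (fun t : ℝ => t * (2 * π)⁻¹) (cocompact ℝ) (cocompact ℝ) :=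
    tendsto_cocompact_mul_right₀ (by positivity)
  have hRL := ((Complex.continuous_im.tendsto 0).comp
    ((Real.tendsto_integral_exp_smul_cocompact fun x => (f x : ℂ)).comp hscale)).neg
  rw [Complex.zero_im, neg_zero] at hRL
  convert hRL using 1
  ext t
  have hint : Integrable (fun x : ℝ => fourierChar (-(x * (t * (2 * π)⁻¹))) • (f x : ℂ)) :=
    (Real.fourierIntegral_convergent_iff' (ContinuousLinearMap.mul ℝ ℝ) _).2 hf.ofReal
  rw [Function.comp_apply, Function.comp_apply, ← Complex.imCLM_apply,
    ← ContinuousLinearMap.integral_comp_comm _ hint, ← integral_neg]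
  congr 1 with x
  rw [Complex.imCLM_apply, Circle.smul_def, fourierChar_apply, smul_eq_mul, Complex.mul_im,
    Complex.ofReal_im, Complex.ofReal_re, Complex.exp_ofReal_mul_I_im]
  field_simp
  rw [sin_neg]
  ring

theorem tendsto_intervalIntegral_mul_sin_cocompact {f : ℝ → ℝ} {a b : ℝ}
    (hf : IntervalIntegrable f volume a b) :
    Tendsto (fun t : ℝ => ∫ x in a..b, f x * sin (t * x)) (cocompact ℝ) (𝓝 0) := by
  rw [tendsto_zero_iff_norm_tendsto_zero]
  simp_rw [intervalIntegral.norm_integral_eq_norm_integral_uIoc, ← integral_indicator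
    measurableSet_uIoc, indicator_mul_left]
  simpa using (tendsto_integral_mul_sin_cocompact
    ((integrable_indicator_iff measurableSet_uIoc).2 hf.def')).norm

theorem AbsolutelyContinuousOnInterval.integral_mul_cos_eq {f : ℝ → ℝ} {a b c : ℝ}
    (hf : AbsolutelyContinuousOnInterval f a b) (hc : c ≠ 0) :
    ∫ x in a..b, f x * cos (c * x) =
      (f b * sin (c * b) - f a * sin (c * a)) / c - (∫ x in a..b, deriv f x * sin (c * x)) / c := by
  have hG : deriv (fun x => sin (c * x) / c) = fun x => cos (c * x) := by
    ext x
    exact (((hasDerivAt_id x).const_mul c).sin.div_const c).deriv.trans (by field_simp; rfl)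
  have hGac : AbsolutelyContinuousOnInterval (fun x => sin (c * x) / c) a b :=
    ContDiffOn.absolutelyContinuousOnInterval (by fun_prop)
  have := hf.integral_mul_deriv_eq_deriv_mul hGac
  rw [hG] at this
  rw [this, ← intervalIntegral.integral_div]
  simp_rw [mul_div_assoc]
  ring

theorem AbsolutelyContinuousOnInterval.integral_mul_sin_eq {f : ℝ → ℝ} {a b c : ℝ}
    (hf : AbsolutelyContinuousOnInterval f a b) (hc : c ≠ 0) :
    ∫ x in a..b, f x * sin (c * x) =
      (f a * cos (c * a) - f b * cos (c * b)) / c + (∫ x in a..b, deriv f x * cos (c * x)) / c := by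
  have hG : deriv (fun x => -cos (c * x) / c) = fun x => sin (c * x) := by
    ext x
    exact (((hasDerivAt_id x).const_mul c).cos.neg.div_const c).deriv.trans (by field_simp; rfl)
  have hGac : AbsolutelyContinuousOnInterval (fun x => -cos (c * x) / c) a b :=
    ContDiffOn.absolutelyContinuousOnInterval (by fun_prop)
  have := hf.integral_mul_deriv_eq_deriv_mul hGac
  rw [hG] at this
  rw [this, ← intervalIntegral.integral_div]
  simp_rw [neg_div, mul_neg, intervalIntegral.integral_neg, mul_div_assoc]
  ring

def cosCoef (f : ℝ → ℝ) (n : ℕ) : ℝ := ∫ x in (0:ℝ)..1, f x * cos (n * π * x)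

def sinCoef (f : ℝ → ℝ) (n : ℕ) : ℝ := ∫ x in (0:ℝ)..1, f x * sin (n * π * x)

theorem phi_one_mul_phi_succ (n : ℕ) (x : ℝ) :
    phi 1 x * phi (n + 1) x = cos (n * π * x) - cos ((n + 2 : ℕ) * π * x) := by
  have hsplit : (n : ℝ) * π * x = (n + 1 : ℕ) * π * x - π * x := by push_cast; ring
  have hsplit' : ((n + 2 : ℕ) : ℝ) * π * x = (n + 1 : ℕ) * π * x + π * x := by push_cast; ring
  rw [hsplit, hsplit', cos_sub, cos_add]
  simp only [phi, Nat.cast_one, one_mul]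
  linear_combination sin (π * x) * sin ((n + 1 : ℕ) * π * x) * Real.mul_self_sqrt zero_le_two

theorem mcoef_succ {μ : ℝ → ℝ} (hμ : IntervalIntegrable μ volume 0 1) (n : ℕ) :
    mcoef μ (n + 1) = cosCoef μ n - cosCoef μ (n + 2) := by
  rw [mcoef, cosCoef, cosCoef, ← intervalIntegral.integral_sub
    (hμ.mul_continuousOn (by fun_prop)) (hμ.mul_continuousOn (by fun_prop))]
  refine intervalIntegral.integral_congr fun x _ => ?_
  rw [mul_assoc, phi_one_mul_phi_succ, mul_sub]

theorem cosCoef_eq {f : ℝ → ℝ} (hf : ContDiff ℝ 2 f)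
    (hac : AbsolutelyContinuousOnInterval (iteratedDeriv 2 f) 0 1) {n : ℕ} (hn : n ≠ 0) :
    cosCoef f n = ((-1) ^ n * deriv f 1 - deriv f 0) / (n * π) ^ 2
      + sinCoef (iteratedDeriv 3 f) n / (n * π) ^ 3 := by
  have hc : (n : ℝ) * π ≠ 0 := by positivity
  have hf' : ContDiff ℝ 1 (deriv f) := (contDiff_succ_iff_deriv.1 hf).2.2
  simp only [iteratedDeriv_succ, iteratedDeriv_zero] at hac ⊢
  rw [cosCoef, sinCoef,
    (hf.of_le one_le_two).contDiffOn.absolutelyContinuousOnInterval.integral_mul_cos_eq hc,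
    hf'.contDiffOn.absolutelyContinuousOnInterval.integral_mul_sin_eq hc,
    hac.integral_mul_cos_eq hc]
  simp only [mul_zero, mul_one, sin_zero, cos_zero, sin_nat_mul_pi, cos_nat_mul_pi]
  field_simp
  ring

theorem tendsto_sinCoef {f : ℝ → ℝ} (hf : IntervalIntegrable f volume 0 1) :
    Tendsto (sinCoef f) atTop (𝓝 0) :=
  (tendsto_intervalIntegral_mul_sin_cocompact hf).comp <|
    (tendsto_natCast_atTop_atTop.atTop_mul_const pi_pos).mono_right atTop_le_cocompact

theorem eventually_abs_sub_div_cube_lt {u : ℕ → ℝ} (hu : Tendsto u atTop (𝓝 0)) {c : ℝ}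
    (hc : 0 < c) :
    ∀ᶠ n : ℕ in atTop, |u n / n ^ 3 - u (n + 2) / (n + 2) ^ 3| < c / (n + 1) ^ 3 := by
  have hsmall : ∀ᶠ n : ℕ in atTop, |u n| ≤ c / 16 := by
    simpa [Real.dist_eq] using (Metric.tendsto_nhds.1 hu (c / 16) (by positivity)).mono
      fun _ h => h.le
  filter_upwards [hsmall, (tendsto_add_atTop_nat 2).eventually hsmall, eventually_ge_atTop 1]
    with n hn hn2 hn1
  have hn1' : (1 : ℝ) ≤ n := by exact_mod_cast hn1
  have hcube : 1 / (n : ℝ) ^ 3 ≤ 8 / (n + 1) ^ 3 := by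
    rw [div_le_div_iff₀ (by positivity) (by positivity)]
    nlinarith [pow_le_pow_left₀ (by positivity) (show (n : ℝ) + 1 ≤ 2 * n by linarith) 3]
  have hcube2 : 1 / ((n : ℝ) + 2) ^ 3 ≤ 1 / (n + 1) ^ 3 := by gcongr; linarith
  calc |u n / n ^ 3 - u (n + 2) / (n + 2) ^ 3|
      ≤ |u n| * (1 / n ^ 3) + |u (n + 2)| * (1 / (n + 2) ^ 3) := by
        refine (abs_sub _ _).trans_eq ?_
        rw [abs_div, abs_div, abs_of_pos (by positivity : (0 : ℝ) < n ^ 3),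
          abs_of_pos (by positivity : (0 : ℝ) < (n + 2) ^ 3)]
        ring
    _ ≤ c / 16 * (8 / (n + 1) ^ 3) + c / 16 * (1 / (n + 1) ^ 3) := by gcongr
    _ < c / (n + 1) ^ 3 := by
        field_simp
        linarith

/-- If `μ` is of class `H³` and satisfies Hypothesis (H)
(`∃ c > 0, |m_k| ≥ c/k³` for all `k ∈ ℕ*`), then `μ'(1) ≠ μ'(0)` and `μ'(1) ≠ −μ'(0)`. -/
theorem statement5 (μ : ℝ → ℝ) (hμ : IsH3 μ)
    (hH : ∃ c > (0:ℝ), ∀ k : ℕ, 1 ≤ k → c / (k : ℝ) ^ 3 ≤ |mcoef μ k|) :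
    deriv μ 1 ≠ deriv μ 0 ∧ deriv μ 1 ≠ -deriv μ 0 := by
  obtain ⟨c, hc, hH⟩ := hH
  have hC2 := hμ.1
  have hac := hμ.absolutelyContinuousOnInterval_iteratedDeriv_two
  set u : ℕ → ℝ := fun n => sinCoef (iteratedDeriv 3 μ) n / π ^ 3
  have hu : Tendsto u atTop (𝓝 0) := by
    rw [← zero_div (π ^ 3)]
    refine (tendsto_sinCoef ?_).div_const _
    simpa only [iteratedDeriv_succ] using hac.intervalIntegrable_deriv
  have hmcoef : ∀ n ≠ 0, (-1) ^ n * deriv μ 1 = deriv μ 0 →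
      mcoef μ (n + 1) = u n / n ^ 3 - u (n + 2) / (n + 2) ^ 3 := by
    intro n hn hb
    rw [mcoef_succ (hC2.continuous.intervalIntegrable 0 1), cosCoef_eq hC2 hac hn,
      cosCoef_eq hC2 hac (by omega), pow_add, neg_one_sq, mul_one, hb]
    simp only [u]
    push_cast
    field_simp
    ring
  obtain ⟨N, hN⟩ := (eventually_abs_sub_div_cube_lt hu hc).exists_forall_of_atTop
  have hfactor : ∀ n ≥ N, n ≠ 0 → (-1) ^ n * deriv μ 1 ≠ deriv μ 0 := by
    intro n hnN hn hb
    have hlow := hH (n + 1) (by omega)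
    rw [hmcoef n hn hb] at hlow
    push_cast at hlow
    exact (hN n hnN).not_ge hlow
  constructor
  · intro h
    exact hfactor (2 * N + 2) (by omega) (by omega)
      (by rw [h, Even.neg_one_pow ⟨N + 1, by ring⟩, one_mul])
  · intro h
    exact hfactor (2 * N + 1) (by omega) (by omega)
      (by rw [h, Odd.neg_one_pow ⟨N, rfl⟩, neg_one_mul, neg_neg])
end
end

section
/- Let (b_k)_{k∈ℕ*} be complex numbers with Σ_{k∈ℕ*} |b_k| < +∞. If Σ_{k∈ℕ*} b_k / (kπ)^{4j} = 0 for every integer j ≥ 0, then b_k = 0 for every k ∈ ℕ*. -/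
/-!
The weights `ρ k = (kπ)⁻⁴` are positive and strictly decreasing. If the moments
`∑ₖ cₖ ρₖʲ` all vanish, the first term is cancelled by the tail, so
`‖c₀‖ ρ₀ʲ ≤ (∑ₖ ‖cₖ₊₁‖) ρ₁ʲ`; as `ρ₁ / ρ₀ < 1`, letting `j → ∞` gives `c₀ = 0`.
Dropping the first term and repeating kills every coefficient.
-/

open Filter Topology

section Moments

variable {𝕜 : Type*} [NormedField 𝕜] {c ρ : ℕ → 𝕜} {r : ℝ}

lemma norm_mul_pow_le_of_norm_le (hρ : ∀ k, ‖ρ k‖ ≤ r) (j k : ℕ) :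
    ‖c k * ρ k ^ j‖ ≤ ‖c k‖ * r ^ j := by
  rw [norm_mul, norm_pow]
  gcongr
  exact hρ k

lemma norm_tsum_mul_pow_le (hc : Summable fun k => ‖c k‖) (hρ : ∀ k, ‖ρ k‖ ≤ r)
    (j : ℕ) :
    ‖∑' k, c k * ρ k ^ j‖ ≤ (∑' k, ‖c k‖) * r ^ j :=
  tsum_of_norm_bounded (hc.hasSum.mul_right _) (norm_mul_pow_le_of_norm_le hρ j)

lemma tsum_mul_pow_eq_zero_add [CompleteSpace 𝕜] (hc : Summable fun k => ‖c k‖)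
    (hρ : Antitone fun k => ‖ρ k‖) (j : ℕ) :
    ∑' k, c k * ρ k ^ j = c 0 * ρ 0 ^ j + ∑' k, c (k + 1) * ρ (k + 1) ^ j :=
  Summable.tsum_eq_zero_add <| .of_norm_bounded (hc.mul_right _)
    (norm_mul_pow_le_of_norm_le (fun k => hρ k.zero_le) j)

lemma head_eq_zero_of_moments_eq_zero [CompleteSpace 𝕜] (hc : Summable fun k => ‖c k‖)
    (hρ : StrictAnti fun k => ‖ρ k‖) (hm : ∀ j, ∑' k, c k * ρ k ^ j = 0) : c 0 = 0 := by
  set C := ∑' k, ‖c (k + 1)‖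
  have hρ₀ : 0 < ‖ρ 0‖ := (norm_nonneg _).trans_lt (hρ zero_lt_one)
  have hdom : ∀ j, ‖c 0‖ * ‖ρ 0‖ ^ j ≤ C * ‖ρ 1‖ ^ j := by
    intro j
    have hsplit := tsum_mul_pow_eq_zero_add hc hρ.antitone j
    rw [hm j, eq_comm, add_eq_zero_iff_eq_neg] at hsplit
    calc ‖c 0‖ * ‖ρ 0‖ ^ j = ‖c 0 * ρ 0 ^ j‖ := by rw [norm_mul, norm_pow]
      _ = ‖∑' k, c (k + 1) * ρ (k + 1) ^ j‖ := by rw [hsplit, norm_neg]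
      _ ≤ C * ‖ρ 1‖ ^ j :=
        norm_tsum_mul_pow_le ((summable_nat_add_iff (f := fun k => ‖c k‖) 1).2 hc)
          (fun k => hρ.antitone (Nat.le_add_left 1 k)) j
  have hbound : ∀ j, ‖c 0‖ ≤ C * (‖ρ 1‖ / ‖ρ 0‖) ^ j := fun j => by
    rw [div_pow, ← mul_div_assoc, le_div_iff₀ (pow_pos hρ₀ j)]
    exact hdom j
  have hlim : Tendsto (fun j => C * (‖ρ 1‖ / ‖ρ 0‖) ^ j) atTop (𝓝 0) := by
    simpa using (tendsto_pow_atTop_nhds_zero_of_lt_one (by positivity)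
      ((div_lt_one hρ₀).2 (hρ zero_lt_one))).const_mul C
  exact norm_le_zero_iff.1 (ge_of_tendsto' hlim hbound)

theorem eq_zero_of_moments_eq_zero [CompleteSpace 𝕜] (hc : Summable fun k => ‖c k‖)
    (hρ : StrictAnti fun k => ‖ρ k‖) (hm : ∀ j, ∑' k, c k * ρ k ^ j = 0) (n : ℕ) :
    c n = 0 := by
  induction n generalizing c ρ with
  | zero => exact head_eq_zero_of_moments_eq_zero hc hρ hm
  | succ n ih =>
    have hc₀ := head_eq_zero_of_moments_eq_zero hc hρ hm
    refine ih ((summable_nat_add_iff (f := fun k => ‖c k‖) 1).2 hc)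
      (fun _ _ h => hρ (Nat.succ_lt_succ h)) fun j => ?_
    have hsplit := tsum_mul_pow_eq_zero_add hc hρ.antitone j
    rwa [hm j, hc₀, zero_mul, zero_add, eq_comm] at hsplit

end Moments

lemma strictAnti_norm_inv_natCast_mul_pi_pow_four :
    StrictAnti fun k : ℕ => ‖((((k + 1 : ℕ) : ℂ) * (Real.pi : ℂ)) ^ 4)⁻¹‖ := by
  intro a b hab
  simp only [norm_inv, norm_pow, norm_mul, Complex.norm_natCast, Complex.norm_real,
    Real.norm_of_nonneg Real.pi_pos.le]
  gcongr

/-- Let `(b_k)_{k∈ℕ*}` be complex numbers with `Σ_{k∈ℕ*} |b_k| < ∞`.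
If `Σ_{k∈ℕ*} b_k / (kπ)^{4j} = 0` for every integer `j ≥ 0`, then `b_k = 0` for every
`k ∈ ℕ*`.  (The sum over `ℕ*` is written as a sum over `k : ℕ` of the terms of index
`k + 1`.) -/
theorem statement9 (b : ℕ → ℂ)
    (hb : Summable fun k : ℕ => ‖b (k + 1)‖)
    (hmom : ∀ j : ℕ,
      ∑' k : ℕ, b (k + 1) / (((k + 1 : ℕ) : ℂ) * (Real.pi : ℂ)) ^ (4 * j) = 0) :
    ∀ k : ℕ, 1 ≤ k → b k = 0 := by
  have hm : ∀ j,
      ∑' k : ℕ, b (k + 1) * ((((k + 1 : ℕ) : ℂ) * (Real.pi : ℂ)) ^ 4)⁻¹ ^ j = 0 :=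
    fun j => by simpa only [pow_mul, inv_pow, div_eq_mul_inv] using hmom j
  intro k hk
  obtain ⟨n, rfl⟩ := Nat.exists_eq_add_of_le' hk
  exact eq_zero_of_moments_eq_zero hb strictAnti_norm_inv_natCast_mul_pi_pow_four hm n
end

section
/- Let (C_n)_{n∈ℕ} be complex numbers with Σ_{n∈ℕ} |C_n| < +∞, let (μ_n)_{n∈ℕ} be complex numbers, and suppose there exist n₀ ∈ ℕ, θ ∈ ℝ and δ > 0 such that Re(e^{iθ} μ_n) ≤ Re(e^{iθ} μ_{n₀}) − δ for every n ≠ n₀. If Σ_{n∈ℕ} C_n e^{ρ e^{iθ} μ_n} = 0 for every ρ ≥ 0, then C_{n₀} = 0. -/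
/-!
Multiplying the series by `exp (-ρ μ_{n₀})` leaves the term `C_{n₀}` unchanged and turns every
other term into `C_n exp (ρ (μ_n - μ_{n₀}))`, which tends to `0` as `ρ → ∞` because
`Re (μ_n - μ_{n₀}) < 0`, while staying bounded by `‖C_n‖`. By dominated convergence for series
the rescaled sums tend to `C_{n₀}`; they are all `0`.
-/

open Filter Topology Complex

theorem Complex.tendsto_exp_ofReal_mul_atTop_of_re_neg {z : ℂ} (hz : z.re < 0) :
    Tendsto (fun ρ : ℝ => exp (ρ * z)) atTop (𝓝 0) := by
  refine tendsto_exp_comap_re_atBot.comp (tendsto_comap_iff.2 ?_)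
  simpa [Function.comp_def, re_ofReal_mul] using tendsto_id.atTop_mul_const_of_neg hz

theorem Complex.norm_mul_exp_ofReal_mul_le {c z : ℂ} {ρ : ℝ} (hρ : 0 ≤ ρ) (hz : z.re ≤ 0) :
    ‖c * exp (ρ * z)‖ ≤ ‖c‖ := by
  rw [norm_mul, norm_exp, re_ofReal_mul]
  exact mul_le_of_le_one_right (norm_nonneg c)
    (Real.exp_le_one_iff.2 (mul_nonpos_of_nonneg_of_nonpos hρ hz))

section

variable {ι : Type*} {μ : ι → ℂ} {i₀ : ι}

theorem Complex.tendsto_mul_exp_ofReal_mul_sub_atTop [DecidableEq ι] (C : ι → ℂ)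
    (hlt : ∀ i ≠ i₀, (μ i).re < (μ i₀).re) (i : ι) :
    Tendsto (fun ρ : ℝ => C i * exp (ρ * (μ i - μ i₀))) atTop
      (𝓝 (if i = i₀ then C i₀ else 0)) := by
  split_ifs with h
  · subst h; simp
  · simpa using (tendsto_exp_ofReal_mul_atTop_of_re_neg
      (by simpa using hlt i h : (μ i - μ i₀).re < 0)).const_mul (C i)

theorem Complex.eq_zero_of_tsum_mul_exp_eq_zero {C : ι → ℂ} (hC : Summable fun i => ‖C i‖)
    (hlt : ∀ i ≠ i₀, (μ i).re < (μ i₀).re)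
    (hzero : ∀ᶠ ρ : ℝ in atTop, ∑' i, C i * exp (ρ * μ i) = 0) :
    C i₀ = 0 := by
  classical
  have hle : ∀ i, (μ i - μ i₀).re ≤ 0 := fun i => by
    rcases eq_or_ne i i₀ with rfl | h
    · simp
    · simpa using (hlt i h).le
  have hlim := tendsto_tsum_of_dominated_convergence hC
    (tendsto_mul_exp_ofReal_mul_sub_atTop C hlt)
    ((eventually_ge_atTop 0).mono fun ρ hρ i => norm_mul_exp_ofReal_mul_le hρ (hle i))
  rw [tsum_ite_eq] at hlim
  have hshift : ∀ ρ : ℝ, ∑' i, C i * exp (ρ * (μ i - μ i₀))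
      = exp (-(ρ * μ i₀)) * ∑' i, C i * exp (ρ * μ i) := fun ρ => by
    rw [← tsum_mul_left]
    congr 1 with i
    rw [mul_sub, sub_eq_add_neg, exp_add]
    ring
  refine tendsto_nhds_unique hlim (tendsto_const_nhds.congr' ?_)
  filter_upwards [hzero] with ρ hρ
  rw [hshift, hρ, mul_zero]

end

/-- Let `(C_n)` be complex numbers with `Σ |C_n| < ∞`, let `(μ_n)` be
complex numbers, and suppose there are `n₀`, `θ` and `δ > 0` such that
`Re(e^{iθ} μ_n) ≤ Re(e^{iθ} μ_{n₀}) − δ` for every `n ≠ n₀`.  If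
`Σ_n C_n e^{ρ e^{iθ} μ_n} = 0` for every `ρ ≥ 0`, then `C_{n₀} = 0`. -/
theorem statement10 (C : ℕ → ℂ) (hC : Summable fun n : ℕ => ‖C n‖)
    (μ : ℕ → ℂ) (n₀ : ℕ) (θ : ℝ) (δ : ℝ) (hδ : 0 < δ)
    (hsep : ∀ n : ℕ, n ≠ n₀ →
      (Complex.exp (θ * Complex.I) * μ n).re
        ≤ (Complex.exp (θ * Complex.I) * μ n₀).re - δ)
    (hzero : ∀ ρ : ℝ, 0 ≤ ρ →
      ∑' n : ℕ, C n * Complex.exp ((ρ : ℂ) * Complex.exp (θ * Complex.I) * μ n) = 0) :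
    C n₀ = 0 := by
  refine eq_zero_of_tsum_mul_exp_eq_zero hC (μ := fun n => exp (θ * I) * μ n)
    (fun n hn => (hsep n hn).trans_lt (sub_lt_self _ hδ)) ?_
  filter_upwards [eventually_ge_atTop 0] with ρ hρ
  simpa only [mul_assoc] using hzero ρ hρ
end

section
/- Let λ > 0 and set λ_j := (jπ)² for j ∈ ℕ*. Then Σ_{k∈ℕ*} ( Σ_{n∈ℕ*} λ_k (λ² + λ_k² − λ_n²) / ((λ² + (λ_k − λ_n)²)(λ² + (λ_k + λ_n)²)) )² < +∞; in particular, for each k the inner series converges absolutely. -/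
noncomputable section

/-- The Dirichlet eigenvalues `λ_j = (jπ)²` of `−Δ` on `(0,1)`. -/
def lam (j : ℕ) : ℝ := (j * Real.pi) ^ 2

/-- The summand `d_{nk}^{12} = λ_k(λ² + λ_k² − λ_n²)/δ_{nk}(λ)`, with
`δ_{nk}(λ) = (λ² + (λ_k − λ_n)²)(λ² + (λ_k + λ_n)²)`. -/
def d12 (l : ℝ) (n k : ℕ) : ℝ :=
  lam k * (l ^ 2 + lam k ^ 2 - lam n ^ 2)
    / ((l ^ 2 + (lam k - lam n) ^ 2) * (l ^ 2 + (lam k + lam n) ^ 2))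

lemma lam_pos {k : ℕ} (hk : 1 ≤ k) : 0 < lam k := by
  have h1 : (0:ℝ) < (k:ℝ) := by exact_mod_cast hk
  have := Real.pi_pos
  unfold lam
  positivity

lemma abs_d12_le {l : ℝ} (hl : 0 < l) {n k : ℕ} (hk : 1 ≤ k) (hn : 1 ≤ n) (hnk : n ≠ k) :
    |d12 l n k| ≤ 1 / (Real.pi ^ 2 * |(k:ℝ) - (n:ℝ)| * ((k:ℝ) + (n:ℝ))) := by
  have hπ := Real.pi_pos
  have hlk : 0 < lam k := lam_pos hk
  have hln : 0 < lam n := lam_pos hn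
  set a : ℝ := lam k - lam n with ha
  set b : ℝ := lam k + lam n with hb
  have hbpos : 0 < b := by positivity
  have hδ : 0 < (l ^ 2 + a ^ 2) * (l ^ 2 + b ^ 2) := by positivity
  have hkn : (k:ℝ) ≠ (n:ℝ) := by exact_mod_cast (Ne.symm hnk)
  have hmpos : 0 < |(k:ℝ) - (n:ℝ)| := abs_pos.mpr (sub_ne_zero.mpr hkn)
  have hspos : (0:ℝ) < (k:ℝ) + (n:ℝ) := by
    have : (0:ℝ) < (k:ℝ) := by exact_mod_cast hk
    have : (0:ℝ) < (n:ℝ) := by exact_mod_cast hn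
    linarith [show (0:ℝ) < (k:ℝ) from by exact_mod_cast hk]
  have hA : |a| = Real.pi ^ 2 * |(k:ℝ) - (n:ℝ)| * ((k:ℝ) + (n:ℝ)) := by
    have h1 : a = Real.pi ^ 2 * ((k:ℝ) - (n:ℝ)) * ((k:ℝ) + (n:ℝ)) := by
      rw [ha]; unfold lam; ring
    rw [h1, abs_mul, abs_mul, abs_of_pos (by positivity : (0:ℝ) < Real.pi ^ 2),
      abs_of_pos hspos]
  rw [← hA]
  have hd : d12 l n k = lam k * (l ^ 2 + a * b) / ((l ^ 2 + a ^ 2) * (l ^ 2 + b ^ 2)) := by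
    rw [d12, ha, hb]; ring
  rw [hd, abs_div, abs_mul, abs_of_pos hlk, abs_of_pos hδ]
  rw [div_le_div_iff₀ hδ (show (0:ℝ) < |a| by rw [hA]; positivity)]
  -- goal : lam k * |l^2 + a*b| * |a| ≤ 1 * ((l^2+a^2)*(l^2+b^2))
  have hX2 : (l ^ 2 + a * b) ^ 2 ≤ (l ^ 2 + a ^ 2) * (l ^ 2 + b ^ 2) := by
    nlinarith [sq_nonneg (l * (a - b))]
  have hab2 : a ^ 2 * b ^ 2 ≤ (l ^ 2 + a ^ 2) * (l ^ 2 + b ^ 2) := by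
    nlinarith [sq_nonneg (l * l), sq_nonneg (l * a), sq_nonneg (l * b)]
  have hkb : lam k ≤ b := by rw [hb]; linarith
  have key : b * (|l ^ 2 + a * b| * |a|) ≤ (l ^ 2 + a ^ 2) * (l ^ 2 + b ^ 2) := by
    have h1 : (b * (|l ^ 2 + a * b| * |a|)) ^ 2 ≤ ((l ^ 2 + a ^ 2) * (l ^ 2 + b ^ 2)) ^ 2 := by
      have h2 : (l ^ 2 + a * b) ^ 2 * (a ^ 2 * b ^ 2) ≤
          ((l ^ 2 + a ^ 2) * (l ^ 2 + b ^ 2)) ^ 2 := by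
        have := mul_le_mul hX2 hab2 (by positivity) hδ.le
        calc (l ^ 2 + a * b) ^ 2 * (a ^ 2 * b ^ 2) ≤ _ := this
          _ = ((l ^ 2 + a ^ 2) * (l ^ 2 + b ^ 2)) ^ 2 := by ring
      calc (b * (|l ^ 2 + a * b| * |a|)) ^ 2
          = (l ^ 2 + a * b) ^ 2 * (a ^ 2 * b ^ 2) := by
            rw [mul_pow, mul_pow, sq_abs, sq_abs]; ring
        _ ≤ _ := h2
    have hb0 : 0 ≤ b * (|l ^ 2 + a * b| * |a|) := by positivity
    nlinarith [h1, hb0, hδ]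
  calc lam k * |l ^ 2 + a * b| * |a| ≤ b * (|l ^ 2 + a * b| * |a|) := by
        have : lam k * (|l ^ 2 + a * b| * |a|) ≤ b * (|l ^ 2 + a * b| * |a|) :=
          mul_le_mul_of_nonneg_right hkb (by positivity)
        linarith [this]
    _ ≤ (l ^ 2 + a ^ 2) * (l ^ 2 + b ^ 2) := key
    _ = 1 * ((l ^ 2 + a ^ 2) * (l ^ 2 + b ^ 2)) := by ring


lemma abs_d12_le_rpow {l : ℝ} (hl : 0 < l) {n k : ℕ} (hk : 1 ≤ k) (hn : 1 ≤ n) (hnk : n ≠ k) :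
    |d12 l n k| ≤
      1 / (Real.pi ^ 2 * |(k:ℝ) - (n:ℝ)| ^ ((5:ℝ)/4) * (k:ℝ) ^ ((3:ℝ)/4)) := by
  have hπ := Real.pi_pos
  have hm1 : (1:ℝ) ≤ |(k:ℝ) - (n:ℝ)| := by
    rcases Nat.lt_or_ge n k with h | h
    · rw [abs_of_pos (by exact_mod_cast sub_pos.mpr (show (n:ℝ) < k by exact_mod_cast h))]
      have : (n:ℝ) + 1 ≤ (k:ℝ) := by exact_mod_cast h
      linarith
    · have h' : k < n := lt_of_le_of_ne h (Ne.symm hnk)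
      rw [abs_of_neg (by exact_mod_cast sub_neg.mpr (show (k:ℝ) < n by exact_mod_cast h'))]
      have : (k:ℝ) + 1 ≤ (n:ℝ) := by exact_mod_cast h'
      linarith
  have hk1 : (1:ℝ) ≤ (k:ℝ) := by exact_mod_cast hk
  have hn1 : (1:ℝ) ≤ (n:ℝ) := by exact_mod_cast hn
  have hms : |(k:ℝ) - (n:ℝ)| ≤ (k:ℝ) + (n:ℝ) := by
    rw [abs_sub_le_iff]; constructor <;> linarith
  have hmpos : (0:ℝ) < |(k:ℝ) - (n:ℝ)| := by linarith
  have hspos : (0:ℝ) < (k:ℝ) + (n:ℝ) := by linarith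
  refine (abs_d12_le hl hk hn hnk).trans ?_
  apply one_div_le_one_div_of_le (by positivity)
  set m : ℝ := |(k:ℝ) - (n:ℝ)| with hmdef
  set s : ℝ := (k:ℝ) + (n:ℝ)
  have h1 : m ^ ((5:ℝ)/4) = m * m ^ ((1:ℝ)/4) := by
    rw [show (5:ℝ)/4 = 1 + 1/4 by norm_num, Real.rpow_add hmpos, Real.rpow_one]
  have h2 : s = s ^ ((1:ℝ)/4) * s ^ ((3:ℝ)/4) := by
    rw [← Real.rpow_add hspos]
    norm_num
  have h3 : m ^ ((1:ℝ)/4) ≤ s ^ ((1:ℝ)/4) :=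
    Real.rpow_le_rpow hmpos.le hms (by norm_num)
  have hks : (k:ℝ) ≤ s := by simp only [s]; linarith
  have h4 : (k:ℝ) ^ ((3:ℝ)/4) ≤ s ^ ((3:ℝ)/4) :=
    Real.rpow_le_rpow (by linarith) hks (by norm_num)
  calc Real.pi ^ 2 * m ^ ((5:ℝ)/4) * (k:ℝ) ^ ((3:ℝ)/4)
      = Real.pi ^ 2 * (m * (m ^ ((1:ℝ)/4) * (k:ℝ) ^ ((3:ℝ)/4))) := by rw [h1]; ring
    _ ≤ Real.pi ^ 2 * (m * (s ^ ((1:ℝ)/4) * s ^ ((3:ℝ)/4))) := by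
        apply mul_le_mul_of_nonneg_left _ (by positivity)
        apply mul_le_mul_of_nonneg_left _ (by positivity)
        exact mul_le_mul h3 h4 (by positivity) (by positivity)
    _ = Real.pi ^ 2 * m * s := by rw [← h2]; ring

lemma abs_d12_diag_le {l : ℝ} (hl : 0 < l) {k : ℕ} (hk : 1 ≤ k) :
    |d12 l k k| ≤ 1 / (4 * (Real.pi ^ 2 * (k:ℝ) ^ ((3:ℝ)/4))) := by
  have hπ := Real.pi_pos
  have hlk : 0 < lam k := lam_pos hk
  have hk1 : (1:ℝ) ≤ (k:ℝ) := by exact_mod_cast hk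
  have hd : d12 l k k = lam k * l ^ 2 / (l ^ 2 * (l ^ 2 + (lam k + lam k) ^ 2)) := by
    rw [d12]; ring
  have hd' : d12 l k k = lam k / (l ^ 2 + 4 * lam k ^ 2) := by
    rw [hd]
    rw [mul_comm (lam k) (l ^ 2), mul_div_mul_left _ _ (by positivity : (l:ℝ) ^ 2 ≠ 0)]
    ring_nf
  rw [hd', abs_of_pos (by positivity)]
  rw [div_le_div_iff₀ (by positivity) (by positivity)]
  -- lam k * (4 * (π² * k^{3/4})) ≤ 1 * (l² + 4 lam k²)
  have hrp : (k:ℝ) ^ ((3:ℝ)/4) ≤ (k:ℝ) ^ 2 := by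
    rw [← Real.rpow_natCast (k:ℝ) 2]
    exact Real.rpow_le_rpow_of_exponent_le hk1 (by norm_num)
  have hlam : Real.pi ^ 2 * (k:ℝ) ^ ((3:ℝ)/4) ≤ lam k := by
    have : lam k = Real.pi ^ 2 * (k:ℝ) ^ 2 := by unfold lam; ring
    rw [this]
    exact mul_le_mul_of_nonneg_left hrp (by positivity)
  nlinarith [sq_nonneg l, hlk, mul_le_mul_of_nonneg_left hlam hlk.le]


/-- the shifted p-series majorant -/
def gmaj (m : ℕ) : ℝ := 1 / ((m:ℝ) + 1) ^ ((5:ℝ)/4)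

lemma gmaj_summable : Summable gmaj := by
  have h : Summable fun n : ℕ => 1 / (n:ℝ) ^ ((5:ℝ)/4) :=
    Real.summable_one_div_nat_rpow.mpr (by norm_num)
  have h2 := (summable_nat_add_iff 1).mpr h
  refine h2.congr fun m => ?_
  simp [gmaj]

def Zc : ℝ := ∑' m, gmaj m

lemma gmaj_nonneg (m : ℕ) : 0 ≤ gmaj m := by unfold gmaj; positivity

lemma Zc_nonneg : 0 ≤ Zc := tsum_nonneg gmaj_nonneg

lemma sum_gmaj_le (w : Finset ℕ) (e : ℕ → ℕ)
    (he : ∀ x ∈ w, ∀ y ∈ w, e x = e y → x = y) :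
    ∑ n ∈ w, gmaj (e n) ≤ Zc := by
  rw [← Finset.sum_image he]
  exact Summable.sum_le_tsum _ (fun m _ => gmaj_nonneg m) gmaj_summable

lemma sum_bound {l : ℝ} (hl : 0 < l) {k : ℕ} (hk : 1 ≤ k) (u : Finset ℕ) :
    ∑ n ∈ u, |d12 l (n + 1) k| ≤ (2 * Zc + 1) / (Real.pi ^ 2 * (k:ℝ) ^ ((3:ℝ)/4)) := by
  have hπ := Real.pi_pos
  have hk1 : (1:ℝ) ≤ (k:ℝ) := by exact_mod_cast hk
  set D : ℝ := Real.pi ^ 2 * (k:ℝ) ^ ((3:ℝ)/4) with hD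
  have hDpos : 0 < D := by positivity
  classical
  -- off-diagonal pointwise bound
  have hoffpt : ∀ n : ℕ, n + 1 ≠ k →
      |d12 l (n + 1) k| ≤ gmaj (if n + 1 < k then k - n - 2 else n - k) / D := by
    intro n hne
    have hb := abs_d12_le_rpow hl hk (Nat.le_add_left 1 n) hne
    set e : ℕ := if n + 1 < k then k - n - 2 else n - k with he
    have habs : |(k:ℝ) - ((n:ℝ) + 1)| = ((e : ℕ) : ℝ) + 1 := by
      have hcast : ((e : ℕ) : ℝ) + 1 = |(k:ℝ) - ((n:ℝ) + 1)| := by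
        rw [he]
        split_ifs with hlt
        · have h2 : (k - n - 2) + 1 = k - (n + 1) := by omega
          have h3 : (((k - n - 2 : ℕ) : ℝ)) + 1 = (((k - n - 2) + 1 : ℕ) : ℝ) := by
            push_cast; ring
          rw [h3, h2, Nat.cast_sub (by omega : n + 1 ≤ k)]
          rw [abs_of_pos]
          · push_cast; ring
          · have : ((n:ℝ)) + 2 ≤ (k:ℝ) := by exact_mod_cast (by omega : n + 2 ≤ k)
            linarith
        · have hkn : k ≤ n := by omega
          have h2 : (n - k) + 1 = (n + 1) - k := by omega
          have h3 : (((n - k : ℕ) : ℝ)) + 1 = (((n - k) + 1 : ℕ) : ℝ) := by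
            push_cast; ring
          rw [h3, h2, Nat.cast_sub (by omega : k ≤ n + 1)]
          rw [abs_of_nonpos]
          · push_cast; ring
          · have : ((k:ℝ)) ≤ (n:ℝ) := by exact_mod_cast hkn
            linarith
      exact hcast.symm
    have hcast2 : ((n + 1 : ℕ) : ℝ) = (n : ℝ) + 1 := by push_cast; ring
    rw [hcast2] at hb
    refine hb.trans (le_of_eq ?_)
    rw [habs, gmaj, div_div, hD]
    ring_nf
  -- split the sum at the diagonal
  rw [← Finset.sum_filter_add_sum_filter_not u (fun n => n + 1 = k)]
  have hdiag : ∑ n ∈ u.filter (fun n => n + 1 = k), |d12 l (n + 1) k| ≤ 1 / (4 * D) := by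
    have hsub : u.filter (fun n => n + 1 = k) ⊆ {k - 1} := by
      intro n hn
      simp only [Finset.mem_filter] at hn
      simp only [Finset.mem_singleton]
      omega
    calc ∑ n ∈ u.filter (fun n => n + 1 = k), |d12 l (n + 1) k|
        ≤ ∑ n ∈ ({k - 1} : Finset ℕ), |d12 l (n + 1) k| :=
          Finset.sum_le_sum_of_subset_of_nonneg hsub (fun _ _ _ => abs_nonneg _)
      _ = |d12 l (k - 1 + 1) k| := Finset.sum_singleton _ _
      _ ≤ 1 / (4 * D) := by
          have hkk : k - 1 + 1 = k := by omega
          rw [hkk, hD]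
          exact abs_d12_diag_le hl hk
  have hoff : ∑ n ∈ u.filter (fun n => ¬ n + 1 = k), |d12 l (n + 1) k| ≤ 2 * Zc / D := by
    set v := u.filter (fun n => ¬ n + 1 = k) with hv
    have hvne : ∀ n ∈ v, n + 1 ≠ k := by
      intro n hn
      simp only [hv, Finset.mem_filter] at hn
      exact hn.2
    rw [← Finset.sum_filter_add_sum_filter_not v (fun n => n + 1 < k)]
    have hbelow : ∑ n ∈ v.filter (fun n => n + 1 < k), |d12 l (n + 1) k| ≤ Zc / D := by
      have h1 : ∀ n ∈ v.filter (fun n => n + 1 < k),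
          |d12 l (n + 1) k| ≤ gmaj (k - n - 2) / D := by
        intro n hn
        simp only [Finset.mem_filter] at hn
        have := hoffpt n (hvne n hn.1)
        rwa [if_pos hn.2] at this
      calc ∑ n ∈ v.filter (fun n => n + 1 < k), |d12 l (n + 1) k|
          ≤ ∑ n ∈ v.filter (fun n => n + 1 < k), gmaj (k - n - 2) / D :=
            Finset.sum_le_sum h1
        _ = (∑ n ∈ v.filter (fun n => n + 1 < k), gmaj (k - n - 2)) / D :=
            (Finset.sum_div _ _ _).symm
        _ ≤ Zc / D := by
            apply (div_le_div_iff_of_pos_right hDpos).mpr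
            apply sum_gmaj_le _ (fun n => k - n - 2)
            intro x hx y hy hxy
            simp only [Finset.mem_filter] at hx hy
            omega
    have habove : ∑ n ∈ v.filter (fun n => ¬ n + 1 < k), |d12 l (n + 1) k| ≤ Zc / D := by
      have h1 : ∀ n ∈ v.filter (fun n => ¬ n + 1 < k),
          |d12 l (n + 1) k| ≤ gmaj (n - k) / D := by
        intro n hn
        simp only [Finset.mem_filter] at hn
        have := hoffpt n (hvne n hn.1)
        rwa [if_neg hn.2] at this
      calc ∑ n ∈ v.filter (fun n => ¬ n + 1 < k), |d12 l (n + 1) k|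
          ≤ ∑ n ∈ v.filter (fun n => ¬ n + 1 < k), gmaj (n - k) / D :=
            Finset.sum_le_sum h1
        _ = (∑ n ∈ v.filter (fun n => ¬ n + 1 < k), gmaj (n - k)) / D :=
            (Finset.sum_div _ _ _).symm
        _ ≤ Zc / D := by
            apply (div_le_div_iff_of_pos_right hDpos).mpr
            apply sum_gmaj_le _ (fun n => n - k)
            intro x hx y hy hxy
            simp only [hv, Finset.mem_filter] at hx hy
            omega
    calc _ ≤ Zc / D + Zc / D := add_le_add hbelow habove
      _ = 2 * Zc / D := by ring
  calc _ ≤ 1 / (4 * D) + 2 * Zc / D := add_le_add hdiag hoff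
    _ ≤ (2 * Zc + 1) / D := by
        rw [div_add_div _ _ (by positivity : (4:ℝ) * D ≠ 0) (ne_of_gt hDpos)]
        rw [div_le_div_iff₀ (by positivity) hDpos]
        ring_nf
        nlinarith [Zc_nonneg, hDpos]



/-- For `λ > 0`:
`Σ_{k∈ℕ*} ( Σ_{n∈ℕ*} λ_k(λ² + λ_k² − λ_n²)/δ_{nk}(λ) )² < ∞`, and for each `k ∈ ℕ*`
the inner series converges absolutely.  (Sums over `ℕ*` are written as sums over `ℕ`
of the terms of index shifted by one.) -/
theorem statement13 (l : ℝ) (hl : 0 < l) :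
    (∀ k : ℕ, 1 ≤ k → Summable fun n : ℕ => |d12 l (n + 1) k|) ∧
    Summable fun k : ℕ => (∑' n : ℕ, d12 l (n + 1) (k + 1)) ^ 2 := by
  have hπ := Real.pi_pos
  have hinner : ∀ k : ℕ, 1 ≤ k → Summable fun n : ℕ => |d12 l (n + 1) k| := by
    intro k hk
    exact summable_of_sum_le (fun n => abs_nonneg _) (fun u => sum_bound hl hk u)
  refine ⟨hinner, ?_⟩
  set C : ℝ := 2 * Zc + 1 with hC
  have hCpos : 0 < C := by have := Zc_nonneg; rw [hC]; linarith
  have hS : ∀ k : ℕ, |∑' n : ℕ, d12 l (n + 1) (k + 1)| ≤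
      C / (Real.pi ^ 2 * ((k:ℝ) + 1) ^ ((3:ℝ)/4)) := by
    intro k
    have hk : 1 ≤ k + 1 := Nat.le_add_left 1 k
    have hsum := hinner (k + 1) hk
    have h1 : |∑' n : ℕ, d12 l (n + 1) (k + 1)| ≤ ∑' n : ℕ, |d12 l (n + 1) (k + 1)| := by
      have := norm_tsum_le_tsum_norm (f := fun n : ℕ => d12 l (n + 1) (k + 1))
        (by simpa [Real.norm_eq_abs] using hsum)
      simpa [Real.norm_eq_abs] using this
    have h2 : ∑' n : ℕ, |d12 l (n + 1) (k + 1)| ≤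
        C / (Real.pi ^ 2 * (((k + 1 : ℕ)):ℝ) ^ ((3:ℝ)/4)) :=
      Summable.tsum_le_of_sum_le hsum (fun u => sum_bound hl hk u)
    have hcast : (((k + 1 : ℕ)):ℝ) = (k:ℝ) + 1 := by push_cast; ring
    rw [hcast] at h2
    exact h1.trans h2
  -- majorant
  have hmaj : Summable fun k : ℕ => (C / Real.pi ^ 2) ^ 2 * (1 / ((k:ℝ) + 1) ^ ((3:ℝ)/2)) := by
    have h : Summable fun n : ℕ => 1 / (n:ℝ) ^ ((3:ℝ)/2) :=
      Real.summable_one_div_nat_rpow.mpr (by norm_num)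
    have h2 := (summable_nat_add_iff 1).mpr h
    exact (h2.congr (fun m => by push_cast; ring)).mul_left _
  apply Summable.of_nonneg_of_le (fun k => sq_nonneg _) _ hmaj
  intro k
  have hb : (0:ℝ) < (k:ℝ) + 1 := by positivity
  have heq : C / (Real.pi ^ 2 * ((k:ℝ) + 1) ^ ((3:ℝ)/4)) =
      C / Real.pi ^ 2 * (1 / ((k:ℝ) + 1) ^ ((3:ℝ)/4)) := by
    field_simp
  have hsq : (∑' n : ℕ, d12 l (n + 1) (k + 1)) ^ 2 ≤
      (C / (Real.pi ^ 2 * ((k:ℝ) + 1) ^ ((3:ℝ)/4))) ^ 2 := by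
    rw [← sq_abs]
    exact pow_le_pow_left₀ (abs_nonneg _) (hS k) 2
  refine hsq.trans (le_of_eq ?_)
  rw [heq, mul_pow]
  congr 1
  rw [div_pow, one_pow, ← Real.rpow_natCast (((k:ℝ) + 1) ^ ((3:ℝ)/4)) 2,
    ← Real.rpow_mul hb.le]
  norm_num


end
end

section
/- Let λ > 0 and set λ_j := (jπ)² for j ∈ ℕ*. Then Σ_{k∈ℕ*} ( Σ_{n∈ℕ*, n≠k} λ (λ² + λ_k² + λ_n²) / ((λ² + (λ_k − λ_n)²)(λ² + (λ_k + λ_n)²)) )² < +∞; in particular, for each k the inner series converges absolutely. -/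
noncomputable section

/-- The summand `d_{nk}^{22} = λ(λ² + λ_k² + λ_n²)/δ_{nk}(λ)`, with
`δ_{nk}(λ) = (λ² + (λ_k − λ_n)²)(λ² + (λ_k + λ_n)²)`. -/
def d22 (l : ℝ) (n k : ℕ) : ℝ :=
  l * (l ^ 2 + lam k ^ 2 + lam n ^ 2)
    / ((l ^ 2 + (lam k - lam n) ^ 2) * (l ^ 2 + (lam k + lam n) ^ 2))

lemma d22_nonneg (l : ℝ) (hl : 0 < l) (n k : ℕ) : 0 ≤ d22 l n k := by
  unfold d22
  have h1 : 0 < l ^ 2 + (lam k - lam n) ^ 2 := by positivity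
  have h2 : 0 < l ^ 2 + (lam k + lam n) ^ 2 := by positivity
  have h3 : 0 ≤ l * (l ^ 2 + lam k ^ 2 + lam n ^ 2) := by
    have : 0 ≤ lam k ^ 2 := sq_nonneg _
    have : 0 ≤ lam n ^ 2 := sq_nonneg _
    positivity
  exact div_nonneg h3 (mul_pos h1 h2).le

lemma d22_le (l : ℝ) (hl : 0 < l) {a b : ℕ} (ha : 1 ≤ a) (hb : 1 ≤ b) (hab : a ≠ b) :
    d22 l a b ≤ l / Real.pi ^ 4 * (1 / ((a : ℝ) + b) ^ 2) := by
  have hπ := Real.pi_pos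
  have hs0 : (0:ℝ) < (a : ℝ) + b := by
    have : (1:ℝ) ≤ (a:ℝ) := by exact_mod_cast ha
    have : (1:ℝ) ≤ (b:ℝ) := by exact_mod_cast hb
    linarith
  have hone : (1:ℝ) ≤ ((b:ℝ) - a) ^ 2 := by
    have h1 : (1:ℤ) ≤ |(b:ℤ) - a| := Int.one_le_abs (sub_ne_zero.mpr (by exact_mod_cast hab.symm))
    have h2 : (1:ℝ) ≤ |(b:ℝ) - a| := by
      have := h1
      have : ((1:ℤ):ℝ) ≤ (|(b:ℤ) - a| : ℤ) := by exact_mod_cast h1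
      simpa [Int.cast_abs] using this
    nlinarith [abs_nonneg ((b:ℝ) - a), sq_abs ((b:ℝ) - a)]
  have hdiff : (lam b - lam a) ^ 2 = Real.pi ^ 4 * (((b:ℝ) - a) ^ 2 * ((a:ℝ) + b) ^ 2) := by
    unfold lam; ring
  have hA : Real.pi ^ 4 * ((a:ℝ) + b) ^ 2 ≤ l ^ 2 + (lam b - lam a) ^ 2 := by
    rw [hdiff]
    nlinarith [mul_le_mul_of_nonneg_left hone
        (show (0:ℝ) ≤ Real.pi ^ 4 * ((a:ℝ) + b) ^ 2 by positivity), sq_nonneg l]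
  have hsum' : (a:ℝ) + b ≤ (a:ℝ) ^ 2 + (b:ℝ) ^ 2 := by
    have h1 : (1:ℝ) ≤ (a:ℝ) := by exact_mod_cast ha
    have h2 : (1:ℝ) ≤ (b:ℝ) := by exact_mod_cast hb
    nlinarith
  have hB : Real.pi ^ 4 * ((a:ℝ) + b) ^ 2 ≤ l ^ 2 + (lam b + lam a) ^ 2 := by
    have h2 : Real.pi ^ 2 * ((a:ℝ) + b) ≤ lam b + lam a := by
      unfold lam
      nlinarith [mul_le_mul_of_nonneg_left hsum' (sq_nonneg Real.pi)]
    have h3 : (Real.pi ^ 2 * ((a:ℝ) + b)) ^ 2 ≤ (lam b + lam a) ^ 2 := by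
      have h0 : (0:ℝ) ≤ Real.pi ^ 2 * ((a:ℝ) + b) := by positivity
      nlinarith
    nlinarith [sq_nonneg l]
  have hA0 : (0:ℝ) < l ^ 2 + (lam b - lam a) ^ 2 := by positivity
  have hB0 : (0:ℝ) < l ^ 2 + (lam b + lam a) ^ 2 := by positivity
  have key : d22 l a b
      = l / 2 * ((l ^ 2 + (lam b - lam a) ^ 2)⁻¹ + (l ^ 2 + (lam b + lam a) ^ 2)⁻¹) := by
    unfold d22
    field_simp
    ring
  have hD : (0:ℝ) < Real.pi ^ 4 * ((a:ℝ) + b) ^ 2 := by positivity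
  have h1' : (l ^ 2 + (lam b - lam a) ^ 2)⁻¹ ≤ (Real.pi ^ 4 * ((a:ℝ) + b) ^ 2)⁻¹ := by
    exact inv_anti₀ hD hA
  have h2' : (l ^ 2 + (lam b + lam a) ^ 2)⁻¹ ≤ (Real.pi ^ 4 * ((a:ℝ) + b) ^ 2)⁻¹ := by
    exact inv_anti₀ hD hB
  rw [key]
  calc l / 2 * ((l ^ 2 + (lam b - lam a) ^ 2)⁻¹ + (l ^ 2 + (lam b + lam a) ^ 2)⁻¹)
      ≤ l / 2 * ((Real.pi ^ 4 * ((a:ℝ) + b) ^ 2)⁻¹ + (Real.pi ^ 4 * ((a:ℝ) + b) ^ 2)⁻¹) := by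
        have hl2 : (0:ℝ) ≤ l / 2 := by linarith
        exact mul_le_mul_of_nonneg_left (add_le_add h1' h2') hl2
    _ = l / Real.pi ^ 4 * (1 / ((a : ℝ) + b) ^ 2) := by
        field_simp
        ring

lemma summable_inv_sq : Summable (fun n : ℕ => 1 / ((n:ℝ) + 1) ^ 2) := by
  have h0 : Summable (fun n : ℕ => 1 / (n:ℝ) ^ 2) :=
    Real.summable_one_div_nat_pow.mpr one_lt_two
  have h := (summable_nat_add_iff 1).mpr h0
  refine h.congr fun n => ?_
  push_cast
  ring

/-- For `λ > 0`:
`Σ_{k∈ℕ*} ( Σ_{n∈ℕ*, n≠k} λ(λ² + λ_k² + λ_n²)/δ_{nk}(λ) )² < ∞`, and for each `k ∈ ℕ*`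
the inner series converges absolutely.  (Sums over `ℕ*` are written as sums over `ℕ` of
the terms of index shifted by one; the restriction `n ≠ k` is encoded by a vanishing
summand at `n = k`.) -/
theorem statement14 (l : ℝ) (hl : 0 < l) :
    (∀ k : ℕ, 1 ≤ k →
      Summable fun n : ℕ => if n + 1 = k then 0 else |d22 l (n + 1) k|) ∧
    Summable fun k : ℕ =>
      (∑' n : ℕ, if n = k then 0 else d22 l (n + 1) (k + 1)) ^ 2 := by
  have hπ := Real.pi_pos
  set c : ℝ := l / Real.pi ^ 4 with hc
  have hc0 : 0 < c := by positivity
  have part1 : ∀ k : ℕ, 1 ≤ k →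
      Summable fun n : ℕ => if n + 1 = k then 0 else |d22 l (n + 1) k| := by
    intro k hk
    have hg : Summable (fun n : ℕ => c * (1 / ((n:ℝ) + 1) ^ 2)) := summable_inv_sq.mul_left c
    refine Summable.of_nonneg_of_le (fun n => ?_) (fun n => ?_) hg
    · split
      · exact le_rfl
      · exact abs_nonneg _
    · by_cases h : n + 1 = k
      · simp only [h, if_pos rfl]
        positivity
      · rw [if_neg h, abs_of_nonneg (d22_nonneg l hl _ _)]
        calc d22 l (n + 1) k ≤ l / Real.pi ^ 4 * (1 / (((n + 1 : ℕ) : ℝ) + k) ^ 2) :=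
              d22_le l hl (by omega) hk (by omega)
          _ ≤ c * (1 / ((n:ℝ) + 1) ^ 2) := by
              rw [← hc]
              have h1 : (0:ℝ) < (n:ℝ) + 1 := by positivity
              have h2 : ((n:ℝ) + 1) ≤ ((n + 1 : ℕ) : ℝ) + k := by
                push_cast
                have : (1:ℝ) ≤ (k:ℝ) := by exact_mod_cast hk
                linarith
              gcongr
  refine ⟨part1, ?_⟩
  have part1' : ∀ k : ℕ, Summable fun n : ℕ => if n = k then 0 else d22 l (n + 1) (k + 1) := by
    intro k
    refine (part1 (k + 1) (by omega)).congr fun n => ?_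
    by_cases h : n = k
    · simp [h]
    · have h' : n + 1 ≠ k + 1 := by omega
      rw [if_neg h', if_neg h, abs_of_nonneg (d22_nonneg l hl _ _)]
  have hSnn : ∀ k : ℕ, 0 ≤ ∑' n : ℕ, if n = k then 0 else d22 l (n + 1) (k + 1) := by
    intro k
    apply tsum_nonneg
    intro n
    split
    · exact le_rfl
    · exact d22_nonneg l hl _ _
  have hSle : ∀ k : ℕ,
      (∑' n : ℕ, if n = k then 0 else d22 l (n + 1) (k + 1)) ≤ c * (1 / ((k:ℝ) + 1)) := by
    intro k
    apply Summable.tsum_le_of_sum_le (part1' k)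
    intro u
    obtain ⟨N, hN⟩ := u.exists_nat_subset_range
    have step1 : (∑ n ∈ u, (if n = k then 0 else d22 l (n + 1) (k + 1)))
        ≤ ∑ n ∈ Finset.range N, (if n = k then 0 else d22 l (n + 1) (k + 1)) := by
      apply Finset.sum_le_sum_of_subset_of_nonneg hN
      intro i _ _
      split
      · exact le_rfl
      · exact d22_nonneg l hl _ _
    have step2 : (∑ n ∈ Finset.range N, (if n = k then 0 else d22 l (n + 1) (k + 1)))
        ≤ ∑ n ∈ Finset.range N,
            (c * (1 / ((n:ℝ) + k + 1)) - c * (1 / (((n + 1 : ℕ):ℝ) + k + 1))) := by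
      apply Finset.sum_le_sum
      intro n _
      have hx : (0:ℝ) < (n:ℝ) + k + 1 := by positivity
      have hx1 : (0:ℝ) < (n:ℝ) + k + 2 := by linarith
      have htel : 1 / ((n:ℝ) + k + 1) - 1 / ((n:ℝ) + k + 2)
          = 1 / (((n:ℝ) + k + 1) * ((n:ℝ) + k + 2)) := by
        field_simp
        ring
      have hcast : (((n + 1 : ℕ):ℝ) + k + 1) = (n:ℝ) + k + 2 := by push_cast; ring
      rw [hcast, ← mul_sub, htel]
      by_cases h : n = k
      · rw [if_pos h]
        positivity
      · rw [if_neg h]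
        calc d22 l (n + 1) (k + 1)
            ≤ l / Real.pi ^ 4 * (1 / (((n + 1 : ℕ):ℝ) + (k + 1 : ℕ)) ^ 2) :=
              d22_le l hl (by omega) (by omega) (by omega)
          _ ≤ c * (1 / (((n:ℝ) + k + 1) * ((n:ℝ) + k + 2))) := by
              rw [← hc]
              have he : (((n + 1 : ℕ):ℝ) + (k + 1 : ℕ)) = (n:ℝ) + k + 2 := by push_cast; ring
              rw [he]
              have hle : ((n:ℝ) + k + 1) * ((n:ℝ) + k + 2) ≤ ((n:ℝ) + k + 2) ^ 2 := by nlinarith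
              have := one_div_le_one_div_of_le (by positivity) hle
              have hc' : 0 ≤ c := hc0.le
              exact mul_le_mul_of_nonneg_left this hc'
    have step3 : (∑ n ∈ Finset.range N,
        (c * (1 / ((n:ℝ) + k + 1)) - c * (1 / (((n + 1 : ℕ):ℝ) + k + 1))))
        ≤ c * (1 / ((k:ℝ) + 1)) := by
      have := Finset.sum_range_sub' (f := fun i : ℕ => c * (1 / ((i:ℝ) + k + 1))) N
      rw [this]
      have h1 : 0 ≤ c * (1 / (((N:ℕ):ℝ) + k + 1)) := by positivity
      have h2 : c * (1 / (((0:ℕ):ℝ) + k + 1)) = c * (1 / ((k:ℝ) + 1)) := by norm_num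
      rw [h2]
      linarith [h1]
    linarith
  have hg2 : Summable (fun k : ℕ => c ^ 2 * (1 / ((k:ℝ) + 1) ^ 2)) :=
    summable_inv_sq.mul_left (c ^ 2)
  refine Summable.of_nonneg_of_le (fun k => sq_nonneg _) (fun k => ?_) hg2
  calc (∑' n : ℕ, if n = k then 0 else d22 l (n + 1) (k + 1)) ^ 2
      ≤ (c * (1 / ((k:ℝ) + 1))) ^ 2 := by
        exact pow_le_pow_left₀ (hSnn k) (hSle k) 2
    _ = c ^ 2 * (1 / ((k:ℝ) + 1) ^ 2) := by
        rw [mul_pow, one_div_pow]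

end
end

section
/- Set λ_j := (jπ)² for j ∈ ℕ*. Then for every k ∈ ℕ*, Σ_{n∈ℕ*, n≠k} 1/|λ_k − λ_n| ≤ (1/(2kπ²)) · ( 2 Σ_{j=1}^{2k−1} 1/j − 1/(2k) ); consequently the sequence k ↦ Σ_{n≠k} 1/|λ_k − λ_n| belongs to ℓ²(ℕ*;ℝ). -/
noncomputable section

namespace St15

/-- Harmonic numbers as reals. -/
def H (m : ℕ) : ℝ := ∑ i ∈ Finset.range m, 1 / ((i : ℝ) + 1)

lemma H_succ (m : ℕ) : H (m + 1) = H m + 1 / ((m : ℝ) + 1) := by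
  unfold H; rw [Finset.sum_range_succ]

lemma H_add (a b : ℕ) :
    H (a + b) = H a + ∑ i ∈ Finset.range b, 1 / ((a : ℝ) + i + 1) := by
  unfold H; rw [Finset.sum_range_add]
  congr 1
  refine Finset.sum_congr rfl fun i _ => ?_
  push_cast; ring_nf

lemma H_mono_add (a b : ℕ) : H a ≤ H (a + b) := by
  rw [H_add]
  have : (0:ℝ) ≤ ∑ i ∈ Finset.range b, 1 / ((a : ℝ) + i + 1) :=
    Finset.sum_nonneg fun i _ => by positivity
  linarith

lemma Icc_eq_H (M : ℕ) : (∑ j ∈ Finset.Icc 1 M, (1 : ℝ) / j) = H M := by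
  induction M with
  | zero => simp [H]
  | succ m ih =>
      rw [Finset.sum_Icc_succ_top (by omega : 1 ≤ m + 1), ih, H_succ]
      push_cast; ring

lemma H_cast (m : ℕ) : ((harmonic m : ℚ) : ℝ) = H m := by
  induction m with
  | zero => simp [H, harmonic]
  | succ n ih => rw [harmonic_succ, Rat.cast_add, ih, H_succ]; push_cast; ring

lemma H_le_log (m : ℕ) : H m ≤ 1 + Real.log m := by
  rw [← H_cast]; exact harmonic_le_one_add_log m

lemma lam_sub (a b : ℕ) : lam a - lam b = ((a : ℝ) ^ 2 - (b : ℝ) ^ 2) * Real.pi ^ 2 := by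
  unfold lam; ring

/-- Core estimate. -/
lemma core (m : ℕ) :
    (∑' n : ℕ, if n + 1 = m + 1 then 0 else 1 / |lam (m + 1) - lam (n + 1)|)
      ≤ 1 / (2 * ((m : ℝ) + 1) * Real.pi ^ 2)
          * (2 * H (2 * m + 1) - 1 / (2 * ((m : ℝ) + 1))) := by
  have hπ : (0:ℝ) < Real.pi := Real.pi_pos
  set f : ℕ → ℝ := fun n => if n + 1 = m + 1 then 0 else 1 / |lam (m + 1) - lam (n + 1)|
    with hf
  have hfnonneg : ∀ n, 0 ≤ f n := by
    intro n; simp only [hf]; split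
    · exact le_rfl
    · positivity
  set C : ℝ := 1 / (2 * ((m : ℝ) + 1) * Real.pi ^ 2) with hC
  have hCpos : 0 < C := by rw [hC]; positivity
  -- head terms
  have head_term : ∀ n < m, f n = C * (1 / ((m : ℝ) - n) + 1 / ((m : ℝ) + n + 2)) := by
    intro n hn
    have hne : ¬ (n + 1 = m + 1) := by omega
    have hmn : (n : ℝ) < m := by exact_mod_cast hn
    rw [hf]; simp only [if_neg hne]
    have hfac : lam (m+1) - lam (n+1) = (((m:ℝ) - n) * ((m:ℝ) + n + 2)) * Real.pi ^ 2 := by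
      rw [lam_sub]; push_cast; ring
    have h1 : (0:ℝ) < (m:ℝ) - n := by linarith
    have h2 : (0:ℝ) < (m:ℝ) + n + 2 := by positivity
    rw [hfac, abs_of_pos (by positivity), hC]
    field_simp
    ring
  have head : ∑ n ∈ Finset.range m, f n = C * (H (2*m+1) - 1/((m:ℝ)+1)) := by
    rw [Finset.sum_congr rfl (fun n hn => head_term n (Finset.mem_range.mp hn))]
    rw [← Finset.mul_sum, Finset.sum_add_distrib]
    have e1 : ∑ n ∈ Finset.range m, 1 / ((m : ℝ) - n) = H m := by
      have h := Finset.sum_range_reflect (fun j : ℕ => 1 / ((j : ℝ) + 1)) m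
      rw [show H m = ∑ j ∈ Finset.range m, 1 / ((j : ℝ) + 1) from rfl, ← h]
      refine Finset.sum_congr rfl fun n hn => ?_
      have hn' : n < m := Finset.mem_range.mp hn
      have hc : ((m - 1 - n : ℕ) : ℝ) = (m : ℝ) - 1 - n := by
        have hh : m - 1 - n = m - (1 + n) := by omega
        rw [hh, Nat.cast_sub (by omega)]
        push_cast; ring
      rw [hc]
      congr 1
      ring
    have e2 : ∑ n ∈ Finset.range m, 1 / ((m : ℝ) + n + 2) = H (2*m+1) - H (m+1) := by
      have := H_add (m+1) m
      have heq : ∑ i ∈ Finset.range m, 1 / (((m+1 : ℕ) : ℝ) + i + 1)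
          = ∑ n ∈ Finset.range m, 1 / ((m : ℝ) + n + 2) := by
        refine Finset.sum_congr rfl fun i _ => ?_
        push_cast; ring_nf
      have h21 : m + 1 + m = 2*m+1 := by omega
      rw [h21, heq] at this
      linarith
    rw [e1, e2]
    have hs : H (m+1) = H m + 1/((m:ℝ)+1) := H_succ m
    rw [hs]; ring
  -- tail terms
  have tail_term : ∀ i : ℕ, f (m + 1 + i)
      = C * (1 / ((i : ℝ) + 1) - 1 / (2*(m:ℝ) + i + 3)) := by
    intro i
    have hne : ¬ (m + 1 + i + 1 = m + 1) := by omega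
    rw [hf]; simp only [if_neg hne]
    have hfac : lam (m+1) - lam (m+1+i+1)
        = -(((((i:ℝ)+1) * (2*(m:ℝ)+(i:ℝ)+3))) * Real.pi ^ 2) := by
      rw [lam_sub]; push_cast; ring
    have h1 : (0:ℝ) < (i:ℝ) + 1 := by positivity
    have h2 : (0:ℝ) < 2*(m:ℝ) + i + 3 := by positivity
    rw [hfac, abs_neg, abs_of_pos (by positivity), hC]
    field_simp
    ring
  apply Real.tsum_le_of_sum_range_le hfnonneg
  intro N
  have hsub : Finset.range N ⊆ Finset.range (m + 1 + N) := by
    apply Finset.range_subset_range.mpr; omega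
  refine le_trans (Finset.sum_le_sum_of_subset_of_nonneg hsub fun n _ _ => hfnonneg n) ?_
  rw [Finset.sum_range_add, Finset.sum_range_succ]
  have hfm : f m = 0 := by rw [hf]; simp
  rw [hfm, add_zero, head]
  have tail_le : ∑ i ∈ Finset.range N, f (m + 1 + i) ≤ C * H (2*m+2) := by
    rw [Finset.sum_congr rfl (fun i _ => tail_term i), ← Finset.mul_sum]
    apply mul_le_mul_of_nonneg_left _ hCpos.le
    rw [Finset.sum_sub_distrib]
    have e3 : ∑ i ∈ Finset.range N, 1 / ((i:ℝ) + 1) = H N := rfl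
    have e4 : ∑ i ∈ Finset.range N, 1 / (2*(m:ℝ) + i + 3) = H (2*m+2+N) - H (2*m+2) := by
      have := H_add (2*m+2) N
      have heq : ∑ i ∈ Finset.range N, 1 / (((2*m+2 : ℕ) : ℝ) + i + 1)
          = ∑ i ∈ Finset.range N, 1 / (2*(m:ℝ) + i + 3) := by
        refine Finset.sum_congr rfl fun i _ => ?_
        push_cast; ring_nf
      rw [heq] at this
      linarith
    rw [e3, e4]
    have := H_mono_add N (2*m+2)
    have hcomm : N + (2*m+2) = 2*m+2+N := by omega
    rw [hcomm] at this
    linarith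
  have h2m2 : H (2*m+2) = H (2*m+1) + 1/(2*(m:ℝ)+2) := by
    have h := H_succ (2*m+1)
    rw [show 2*m+1+1 = 2*m+2 by omega] at h
    rw [h]; push_cast; ring_nf
  calc C * (H (2*m+1) - 1/((m:ℝ)+1)) + ∑ i ∈ Finset.range N, f (m + 1 + i)
      ≤ C * (H (2*m+1) - 1/((m:ℝ)+1)) + C * H (2*m+2) := by linarith
    _ = C * (2 * H (2*m+1) - 1 / (2 * ((m:ℝ)+1))) := by
        have hm1 : (m:ℝ) + 1 ≠ 0 := by positivity
        rw [h2m2, hC]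
        field_simp
        ring
end St15

/-- For every `k ∈ ℕ*`,
`Σ_{n∈ℕ*, n≠k} 1/|λ_k − λ_n| ≤ (1/(2kπ²)) (2 Σ_{j=1}^{2k−1} 1/j − 1/(2k))`;
consequently `k ↦ Σ_{n≠k} 1/|λ_k − λ_n|` is square-summable (belongs to `ℓ²(ℕ*;ℝ)`).
(Sums over `ℕ*` are written as sums over `ℕ` of the terms of index shifted by one; the
restriction `n ≠ k` is encoded by a vanishing summand at `n = k`.) -/
theorem statement15 :
    (∀ k : ℕ, 1 ≤ k →
      (∑' n : ℕ, if n + 1 = k then 0 else 1 / |lam k - lam (n + 1)|)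
        ≤ 1 / (2 * k * Real.pi ^ 2)
          * (2 * ∑ j ∈ Finset.Icc 1 (2 * k - 1), (1 : ℝ) / j - 1 / (2 * k))) ∧
    Summable fun k : ℕ =>
      (∑' n : ℕ, if n = k then 0 else 1 / |lam (k + 1) - lam (n + 1)|) ^ 2 := by
  constructor
  · intro k hk
    obtain ⟨m, rfl⟩ : ∃ m, k = m + 1 := ⟨k - 1, by omega⟩
    have h1 : 2 * (m + 1) - 1 = 2 * m + 1 := by omega
    rw [h1, St15.Icc_eq_H]
    have := St15.core m
    push_cast
    push_cast at this
    convert this using 2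
  · -- square summability
    have hS : ∀ k : ℕ, (∑' n : ℕ, if n = k then 0 else 1 / |lam (k + 1) - lam (n + 1)|)
        = ∑' n : ℕ, if n + 1 = k + 1 then 0 else 1 / |lam (k + 1) - lam (n + 1)| := by
      intro k
      exact tsum_congr fun n => by simp
    have hnonneg : ∀ k : ℕ,
        0 ≤ ∑' n : ℕ, if n + 1 = k + 1 then 0 else 1 / |lam (k + 1) - lam (n + 1)| := by
      intro k
      apply tsum_nonneg
      intro n; split
      · exact le_rfl
      · positivity
    have hbound : ∀ k : ℕ,
        (∑' n : ℕ, if n + 1 = k + 1 then 0 else 1 / |lam (k + 1) - lam (n + 1)|)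
          ≤ 10 * ((k : ℝ) + 1) ^ (-(3/4) : ℝ) := by
      intro k
      refine (St15.core k).trans ?_
      have hπ : (0:ℝ) < Real.pi := Real.pi_pos
      have hπ1 : (1:ℝ) ≤ Real.pi ^ 2 := by nlinarith [Real.pi_gt_three]
      have hk1 : (0:ℝ) < (k:ℝ) + 1 := by positivity
      have hH : St15.H (2*k+1) ≤ 10 * ((k:ℝ)+1) ^ ((1:ℝ)/4) := by
        have h1 : St15.H (2*k+1) ≤ 1 + Real.log (2*k+1 : ℕ) := St15.H_le_log _
        have hx : ((2*k+1 : ℕ) : ℝ) = 2*(k:ℝ)+1 := by push_cast; ring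
        have h2 : Real.log (2*(k:ℝ)+1) ≤ (2*(k:ℝ)+1) ^ ((1:ℝ)/4) / ((1:ℝ)/4) :=
          Real.log_le_rpow_div (by positivity) (by norm_num)
        have h3 : (2*(k:ℝ)+1) ^ ((1:ℝ)/4) ≤ (2*((k:ℝ)+1)) ^ ((1:ℝ)/4) :=
          Real.rpow_le_rpow (by positivity) (by linarith) (by norm_num)
        have h4 : (2*((k:ℝ)+1)) ^ ((1:ℝ)/4) = (2:ℝ) ^ ((1:ℝ)/4) * ((k:ℝ)+1) ^ ((1:ℝ)/4) :=
          Real.mul_rpow (by norm_num) (by positivity)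
        have h5 : (2:ℝ) ^ ((1:ℝ)/4) ≤ 2 := by
          calc (2:ℝ) ^ ((1:ℝ)/4) ≤ (2:ℝ) ^ (1:ℝ) :=
                Real.rpow_le_rpow_of_exponent_le (by norm_num) (by norm_num)
            _ = 2 := Real.rpow_one 2
        have h6 : (1:ℝ) ≤ ((k:ℝ)+1) ^ ((1:ℝ)/4) := Real.one_le_rpow (by linarith) (by norm_num)
        have h7 : (0:ℝ) ≤ ((k:ℝ)+1) ^ ((1:ℝ)/4) := by linarith
        rw [hx] at h1
        calc St15.H (2*k+1) ≤ 1 + Real.log (2*(k:ℝ)+1) := h1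
          _ ≤ 1 + 4 * ((2*(k:ℝ)+1) ^ ((1:ℝ)/4)) := by linarith [h2]
          _ ≤ 1 + 4 * ((2:ℝ) ^ ((1:ℝ)/4) * ((k:ℝ)+1) ^ ((1:ℝ)/4)) := by
              rw [← h4]
              have := Real.rpow_nonneg (show (0:ℝ) ≤ 2*(k:ℝ)+1 by positivity) ((1:ℝ)/4)
              linarith [h3]
          _ ≤ 1 + 8 * ((k:ℝ)+1) ^ ((1:ℝ)/4) := by nlinarith
          _ ≤ 10 * ((k:ℝ)+1) ^ ((1:ℝ)/4) := by nlinarith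
      have hsmall : 0 ≤ 1 / (2 * ((k:ℝ)+1)) := by positivity
      have hCpos : (0:ℝ) < 1 / (2 * ((k:ℝ) + 1) * Real.pi ^ 2) := by positivity
      calc 1 / (2 * ((k:ℝ) + 1) * Real.pi ^ 2)
              * (2 * St15.H (2*k+1) - 1 / (2 * ((k:ℝ)+1)))
          ≤ 1 / (2 * ((k:ℝ) + 1) * Real.pi ^ 2) * (2 * (10 * ((k:ℝ)+1) ^ ((1:ℝ)/4))) := by
            apply mul_le_mul_of_nonneg_left _ hCpos.le
            linarith
        _ = 10 * (((k:ℝ)+1) ^ ((1:ℝ)/4) / ((k:ℝ)+1)) / Real.pi ^ 2 := by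
            have hk0 : (k:ℝ) + 1 ≠ 0 := by positivity
            field_simp
        _ ≤ 10 * (((k:ℝ)+1) ^ ((1:ℝ)/4) / ((k:ℝ)+1)) / 1 := by
            have hx : (0:ℝ) ≤ 10 * (((k:ℝ)+1) ^ ((1:ℝ)/4) / ((k:ℝ)+1)) := by positivity
            exact div_le_div_of_nonneg_left hx one_pos hπ1
        _ = 10 * ((k : ℝ) + 1) ^ (-(3/4) : ℝ) := by
            rw [div_one]
            congr 1
            rw [show (-(3/4) : ℝ) = (1:ℝ)/4 - 1 by norm_num,
              Real.rpow_sub hk1, Real.rpow_one]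
    -- comparison
    have hbase : Summable (fun k : ℕ => ((k : ℝ) + 1) ^ (-(3/2) : ℝ)) := by
      have h := Real.summable_nat_rpow.mpr (show (-(3/2) : ℝ) < -1 by norm_num)
      have := (_root_.summable_nat_add_iff 1).mpr h
      simpa using this
    refine Summable.of_nonneg_of_le (fun k => sq_nonneg _) (fun k => ?_) (hbase.mul_left 100)
    rw [hS k]
    have h1 : (∑' n : ℕ, if n + 1 = k + 1 then 0 else 1 / |lam (k + 1) - lam (n + 1)|) ^ 2
        ≤ (10 * ((k : ℝ) + 1) ^ (-(3/4) : ℝ)) ^ 2 :=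
      pow_le_pow_left₀ (hnonneg k) (hbound k) 2
    refine h1.trans_eq ?_
    rw [mul_pow, ← Real.rpow_natCast (((k:ℝ)+1) ^ (-(3/4):ℝ)) 2,
      ← Real.rpow_mul (by positivity)]
    norm_num

end
end
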